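/- arXiv:2103.03906 — 7 statements merged into one kernel-verified Lean document; each statement's English description precedes it below -/
import Mathlib

section
/- Let κ : ({1,...,N}²)² → ℝ satisfy |κ((a1,a2),(a3,a4))| ≤ C_κ/(1 + d((a1,a2),(a3,a4))^s) with s > 2, and let x ∈ ℝ^N. Then there exists C > 0 depending only on s and C_κ such that for all fixed a2, a4: the sum over a3 in {1,...,N} of |∑_{a1} κ((a1,a2),(a3,a4)) x_{a1}| is at most C·N^{1/2}·‖x‖₂, where ‖x‖₂ is the Euclidean norm. -/
open Finset MeasureTheory

/-- The metric on index pairs: d((a1,a2),(a3,a4)) = min(|a1-a3|+|a2-a4|, |a1-a4|+|a2-a3|). -/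
noncomputable def dIdx {N : ℕ} (a b : Fin N × Fin N) : ℝ :=
  min (|((a.1:ℕ):ℝ) - ((b.1:ℕ):ℝ)| + |((a.2:ℕ):ℝ) - ((b.2:ℕ):ℝ)|)
      (|((a.1:ℕ):ℝ) - ((b.2:ℕ):ℝ)| + |((a.2:ℕ):ℝ) - ((b.1:ℕ):ℝ)|)

/-- Euclidean norm of a vector in ℝ^N. -/
noncomputable def eucNorm {N : ℕ} (x : Fin N → ℝ) : ℝ := Real.sqrt (∑ i, x i ^ 2)

lemma natDist_cast_real (a b : ℕ) : (Nat.dist a b : ℝ) = |(a:ℝ) - (b:ℝ)| := by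
  rcases le_total a b with h | h
  · rw [Nat.dist_eq_sub_of_le h, Nat.cast_sub h, abs_sub_comm,
      abs_of_nonneg (by simp [Nat.cast_le.2 h] : (0:ℝ) ≤ (b:ℝ) - a)]
  · rw [Nat.dist_eq_sub_of_le_right h, Nat.cast_sub h,
      abs_of_nonneg (by simp [Nat.cast_le.2 h] : (0:ℝ) ≤ (a:ℝ) - b)]

/-- geometric-type tail bound: ∑_{k<n} 1/(1+k^s) ≤ 3 when s ≥ 2. -/
lemma sum_decay_le (s : ℝ) (hs : 2 ≤ s) (n : ℕ) :
    ∑ k ∈ Finset.range n, (1 + (k:ℝ) ^ s)⁻¹ ≤ 3 := by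
  rcases Nat.eq_zero_or_pos n with rfl | hn
  · simp
  have hins : Finset.range n = insert 0 (Finset.Ioo 0 n) := by
    rw [Finset.range_eq_Ico, Finset.Ioo_insert_left hn]
  rw [hins, Finset.sum_insert (by simp)]
  have h0 : (1 + (0:ℝ) ^ s)⁻¹ ≤ 1 := by
    rw [Real.zero_rpow (by linarith : s ≠ 0)]
    norm_num
  have h1 : ∑ k ∈ Finset.Ioo 0 n, (1 + (k:ℝ) ^ s)⁻¹ ≤
      ∑ k ∈ Finset.Ioo 0 n, ((k:ℝ) ^ 2)⁻¹ := by
    apply Finset.sum_le_sum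
    intro k hk
    have hk1 : (1:ℝ) ≤ (k:ℝ) := by
      have := (Finset.mem_Ioo.1 hk).1
      exact_mod_cast this
    apply inv_anti₀ (by positivity)
    have : (k:ℝ) ^ (2:ℝ) ≤ (k:ℝ) ^ s := Real.rpow_le_rpow_of_exponent_le hk1 hs
    rw [Real.rpow_two] at this
    linarith
  have h2 := sum_Ioo_inv_sq_le (α := ℝ) 0 n
  simp only [Nat.cast_zero, zero_add, div_one] at h2
  linarith

/-- Sum over a3 of the 1D decay factor, fiberwise over the distance. -/
lemma sum_fin_decay_le (s : ℝ) (hs : 2 ≤ s) (N : ℕ) (a : Fin N) :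
    ∑ b : Fin N, (1 + |(a:ℝ) - (b:ℝ)| ^ s)⁻¹ ≤ 6 := by
  have hmaps : ∀ b : Fin N, b ∈ Finset.univ → Nat.dist a.1 b.1 ∈ Finset.range N := by
    intro b _
    simp only [Finset.mem_range]
    rcases le_total a.1 b.1 with h | h
    · rw [Nat.dist_eq_sub_of_le h]; omega
    · rw [Nat.dist_eq_sub_of_le_right h]; omega
  calc ∑ b : Fin N, (1 + |(a:ℝ) - (b:ℝ)| ^ s)⁻¹
      = ∑ k ∈ Finset.range N, ∑ b ∈ Finset.univ.filter (fun b : Fin N => Nat.dist a.1 b.1 = k),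
          (1 + |(a:ℝ) - (b:ℝ)| ^ s)⁻¹ := (Finset.sum_fiberwise_of_maps_to hmaps _).symm
    _ ≤ ∑ k ∈ Finset.range N, 2 * (1 + (k:ℝ) ^ s)⁻¹ := by
        apply Finset.sum_le_sum
        intro k _
        have hcard : (Finset.univ.filter (fun b : Fin N => Nat.dist a.1 b.1 = k)).card ≤ 2 := by
          have hsub : (Finset.univ.filter (fun b : Fin N => Nat.dist a.1 b.1 = k)).image
              (fun b : Fin N => b.1) ⊆ {a.1 + k, a.1 - k} := by
            intro m hm
            simp only [Finset.mem_image, Finset.mem_filter] at hm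
            obtain ⟨b, ⟨_, hd⟩, rfl⟩ := hm
            simp only [Finset.mem_insert, Finset.mem_singleton]
            rcases le_total a.1 b.1 with h | h
            · left; rw [Nat.dist_eq_sub_of_le h] at hd; omega
            · right; rw [Nat.dist_eq_sub_of_le_right h] at hd; omega
          calc (Finset.univ.filter (fun b : Fin N => Nat.dist a.1 b.1 = k)).card
              = ((Finset.univ.filter (fun b : Fin N => Nat.dist a.1 b.1 = k)).image
                  (fun b : Fin N => b.1)).card := by
                rw [Finset.card_image_of_injective _ Fin.val_injective]
            _ ≤ ({a.1 + k, a.1 - k} : Finset ℕ).card := Finset.card_le_card hsub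
            _ ≤ 2 := Finset.card_insert_le _ _ |>.trans (by simp)
        have heq : ∀ b ∈ Finset.univ.filter (fun b : Fin N => Nat.dist a.1 b.1 = k),
            (1 + |(a:ℝ) - (b:ℝ)| ^ s)⁻¹ = (1 + (k:ℝ) ^ s)⁻¹ := by
          intro b hb
          simp only [Finset.mem_filter] at hb
          rw [← hb.2, natDist_cast_real]
        rw [Finset.sum_congr rfl heq, Finset.sum_const, nsmul_eq_mul]
        have hpos : (0:ℝ) ≤ (1 + (k:ℝ) ^ s)⁻¹ := by positivity
        have : ((Finset.univ.filter (fun b : Fin N => Nat.dist a.1 b.1 = k)).card : ℝ) ≤ 2 := by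
          exact_mod_cast hcard
        nlinarith
    _ = 2 * ∑ k ∈ Finset.range N, (1 + (k:ℝ) ^ s)⁻¹ := by rw [Finset.mul_sum]
    _ ≤ 2 * 3 := by linarith [sum_decay_le s hs N]
    _ = 6 := by norm_num

theorem cumulant_vector_one_sum (s Cκ : ℝ) (hs : 2 < s) (hCκ : 0 < Cκ) :
    ∃ C : ℝ, 0 < C ∧ ∀ (N : ℕ) (κ : Fin N × Fin N → Fin N × Fin N → ℝ),
      (∀ α β, |κ α β| ≤ Cκ / (1 + dIdx α β ^ s)) →
      ∀ (x : Fin N → ℝ) (a2 a4 : Fin N),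
        ∑ a3 : Fin N, |∑ a1 : Fin N, κ (a1, a2) (a3, a4) * x a1|
          ≤ C * Real.sqrt N * eucNorm x := by
  refine ⟨12 * Cκ, by positivity, ?_⟩
  intro N κ hκ x a2 a4
  -- pointwise kernel bound
  have hd : ∀ a1 a3 : Fin N, |κ (a1, a2) (a3, a4)| ≤
      Cκ * ((1 + |(a1:ℝ) - (a3:ℝ)| ^ s)⁻¹ + (1 + |(a2:ℝ) - (a3:ℝ)| ^ s)⁻¹) := by
    intro a1 a3
    refine (hκ (a1, a2) (a3, a4)).trans ?_
    have hdnn : 0 ≤ dIdx (a1, a2) (a3, a4) := by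
      unfold dIdx; positivity
    have hkey : (1 + dIdx (a1, a2) (a3, a4) ^ s)⁻¹ ≤
        (1 + |(a1:ℝ) - (a3:ℝ)| ^ s)⁻¹ + (1 + |(a2:ℝ) - (a3:ℝ)| ^ s)⁻¹ := by
      have hcases : |(a1:ℝ) - (a3:ℝ)| ≤ dIdx (a1, a2) (a3, a4) ∨
          |(a2:ℝ) - (a3:ℝ)| ≤ dIdx (a1, a2) (a3, a4) := by
        unfold dIdx
        rcases min_cases (|((a1:ℕ):ℝ) - ((a3:ℕ):ℝ)| + |((a2:ℕ):ℝ) - ((a4:ℕ):ℝ)|)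
          (|((a1:ℕ):ℝ) - ((a4:ℕ):ℝ)| + |((a2:ℕ):ℝ) - ((a3:ℕ):ℝ)|) with h | h
        · left; rw [h.1]
          have : (0:ℝ) ≤ |((a2:ℕ):ℝ) - ((a4:ℕ):ℝ)| := abs_nonneg _
          linarith
        · right; rw [h.1]
          have : (0:ℝ) ≤ |((a1:ℕ):ℝ) - ((a4:ℕ):ℝ)| := abs_nonneg _
          linarith
      rcases hcases with h | h
      · have h1 : (1 + dIdx (a1, a2) (a3, a4) ^ s)⁻¹ ≤ (1 + |(a1:ℝ) - (a3:ℝ)| ^ s)⁻¹ := by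
          apply inv_anti₀ (by positivity)
          have := Real.rpow_le_rpow (abs_nonneg _) h (by linarith : (0:ℝ) ≤ s)
          linarith
        have h2 : (0:ℝ) ≤ (1 + |(a2:ℝ) - (a3:ℝ)| ^ s)⁻¹ := by positivity
        linarith
      · have h1 : (1 + dIdx (a1, a2) (a3, a4) ^ s)⁻¹ ≤ (1 + |(a2:ℝ) - (a3:ℝ)| ^ s)⁻¹ := by
          apply inv_anti₀ (by positivity)
          have := Real.rpow_le_rpow (abs_nonneg _) h (by linarith : (0:ℝ) ≤ s)
          linarith
        have h2 : (0:ℝ) ≤ (1 + |(a1:ℝ) - (a3:ℝ)| ^ s)⁻¹ := by positivity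
        linarith
    rw [div_eq_mul_inv]
    exact mul_le_mul_of_nonneg_left hkey hCκ.le
  -- step 1: bring abs inside and swap sums
  have step1 : ∑ a3 : Fin N, |∑ a1 : Fin N, κ (a1, a2) (a3, a4) * x a1| ≤
      ∑ a1 : Fin N, |x a1| * ∑ a3 : Fin N, |κ (a1, a2) (a3, a4)| := by
    calc ∑ a3 : Fin N, |∑ a1 : Fin N, κ (a1, a2) (a3, a4) * x a1|
        ≤ ∑ a3 : Fin N, ∑ a1 : Fin N, |κ (a1, a2) (a3, a4)| * |x a1| := by
          apply Finset.sum_le_sum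
          intro a3 _
          refine (Finset.abs_sum_le_sum_abs _ _).trans ?_
          apply Finset.sum_le_sum
          intro a1 _
          rw [abs_mul]
      _ = ∑ a1 : Fin N, |x a1| * ∑ a3 : Fin N, |κ (a1, a2) (a3, a4)| := by
          rw [Finset.sum_comm]
          congr 1
          ext a1
          rw [Finset.mul_sum]
          congr 1
          ext a3
          ring
  -- step 2: the inner sum is ≤ 12 Cκ
  have step2 : ∀ a1 : Fin N, ∑ a3 : Fin N, |κ (a1, a2) (a3, a4)| ≤ 12 * Cκ := by
    intro a1
    calc ∑ a3 : Fin N, |κ (a1, a2) (a3, a4)|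
        ≤ ∑ a3 : Fin N, Cκ * ((1 + |(a1:ℝ) - (a3:ℝ)| ^ s)⁻¹ + (1 + |(a2:ℝ) - (a3:ℝ)| ^ s)⁻¹) :=
          Finset.sum_le_sum fun a3 _ => hd a1 a3
      _ = Cκ * ((∑ a3 : Fin N, (1 + |(a1:ℝ) - (a3:ℝ)| ^ s)⁻¹) +
            ∑ a3 : Fin N, (1 + |(a2:ℝ) - (a3:ℝ)| ^ s)⁻¹) := by
          rw [← Finset.mul_sum, Finset.sum_add_distrib]
      _ ≤ Cκ * (6 + 6) := by
          have h1 := sum_fin_decay_le s hs.le N a1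
          have h2 := sum_fin_decay_le s hs.le N a2
          nlinarith
      _ = 12 * Cκ := by ring
  -- step 3: Cauchy–Schwarz for ∑ |x|
  have step3 : ∑ a1 : Fin N, |x a1| ≤ Real.sqrt N * eucNorm x := by
    have hcs := sq_sum_le_card_mul_sum_sq (s := (Finset.univ : Finset (Fin N)))
      (f := fun a1 => |x a1|)
    simp only [Finset.card_univ, Fintype.card_fin, sq_abs] at hcs
    have hnn : 0 ≤ ∑ a1 : Fin N, |x a1| := Finset.sum_nonneg fun _ _ => abs_nonneg _
    have := Real.sqrt_le_sqrt hcs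
    rw [Real.sqrt_sq hnn] at this
    refine this.trans ?_
    rw [Real.sqrt_mul (by positivity)]
    unfold eucNorm
    exact le_refl _
  have final : ∑ a1 : Fin N, |x a1| * ∑ a3 : Fin N, |κ (a1, a2) (a3, a4)| ≤
      12 * Cκ * (∑ a1 : Fin N, |x a1|) := by
    rw [Finset.mul_sum]
    apply Finset.sum_le_sum
    intro a1 _
    rw [mul_comm (12 * Cκ)]
    exact mul_le_mul_of_nonneg_left (step2 a1) (abs_nonneg _)
  calc ∑ a3 : Fin N, |∑ a1 : Fin N, κ (a1, a2) (a3, a4) * x a1|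
      ≤ 12 * Cκ * (∑ a1 : Fin N, |x a1|) := step1.trans final
    _ ≤ 12 * Cκ * (Real.sqrt N * eucNorm x) :=
        mul_le_mul_of_nonneg_left step3 (by positivity)
    _ = 12 * Cκ * Real.sqrt N * eucNorm x := by ring
end

section
/- Let κ satisfy |κ(α,β)| ≤ C_κ/(1 + d(α,β)^s) with s > 2, and let x, y ∈ ℝ^N. Then there exists C depending only on s and C_κ such that ∑_{a2,a4=1}^N |∑_{a1,a3=1}^N κ((a1,a2),(a3,a4)) x_{a1} y_{a3}| ≤ C·N·‖x‖₂·‖y‖₂. More precisely, ∑_{a1,a2,a3,a4} |κ((a1,a2),(a3,a4))|·|x_{a1}|·|y_{a3}| ≤ C·N·‖x‖₂·‖y‖₂. -/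
open Finset MeasureTheory

theorem schur_test {ι κ : Type*} [Fintype ι] [Fintype κ] (M : ι → κ → ℝ) (hM : ∀ i j, 0 ≤ M i j)
    {R : ℝ} (hrow : ∀ i, ∑ j, M i j ≤ R) (hcol : ∀ j, ∑ i, M i j ≤ R) (x : ι → ℝ) (y : κ → ℝ) :
    ∑ i, ∑ j, M i j * |x i| * |y j| ≤ R * √(∑ i, x i ^ 2) * √(∑ j, y j ^ 2) := by
  -- without a row, the bounds say nothing about the sign of `R`
  rcases isEmpty_or_nonempty ι with _ | ⟨⟨i₀⟩⟩
  · simp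
  have hR : 0 ≤ R := (Finset.sum_nonneg fun j _ => hM i₀ j).trans (hrow i₀)
  have hx : ∑ p : ι × κ, M p.1 p.2 * x p.1 ^ 2 ≤ R * ∑ i, x i ^ 2 := by
    rw [Fintype.sum_prod_type, Finset.mul_sum]
    refine Finset.sum_le_sum fun i _ => ?_
    simpa only [← Finset.sum_mul] using mul_le_mul_of_nonneg_right (hrow i) (sq_nonneg (x i))
  have hy : ∑ p : ι × κ, M p.1 p.2 * y p.2 ^ 2 ≤ R * ∑ j, y j ^ 2 := by
    rw [Fintype.sum_prod_type_right, Finset.mul_sum]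
    refine Finset.sum_le_sum fun j _ => ?_
    simpa only [← Finset.sum_mul] using mul_le_mul_of_nonneg_right (hcol j) (sq_nonneg (y j))
  calc ∑ i, ∑ j, M i j * |x i| * |y j|
      = ∑ p : ι × κ, √(M p.1 p.2 * x p.1 ^ 2) * √(M p.1 p.2 * y p.2 ^ 2) := by
        rw [Fintype.sum_prod_type]
        refine Finset.sum_congr rfl fun i _ => Finset.sum_congr rfl fun j _ => ?_
        rw [Real.sqrt_mul (hM i j), Real.sqrt_mul (hM i j), Real.sqrt_sq_eq_abs,
          Real.sqrt_sq_eq_abs]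
        linear_combination (-(|x i| * |y j|)) * Real.mul_self_sqrt (hM i j)
    _ ≤ √(∑ p : ι × κ, M p.1 p.2 * x p.1 ^ 2) * √(∑ p : ι × κ, M p.1 p.2 * y p.2 ^ 2) :=
        Real.sum_sqrt_mul_sqrt_le _ (fun p => mul_nonneg (hM _ _) (sq_nonneg _))
          (fun p => mul_nonneg (hM _ _) (sq_nonneg _))
    _ ≤ √(R * ∑ i, x i ^ 2) * √(R * ∑ j, y j ^ 2) := by gcongr
    _ = R * √(∑ i, x i ^ 2) * √(∑ j, y j ^ 2) := by
        rw [Real.sqrt_mul hR, Real.sqrt_mul hR]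
        linear_combination (√(∑ i, x i ^ 2) * √(∑ j, y j ^ 2)) * Real.mul_self_sqrt hR

noncomputable def polyDecay (p t : ℝ) : ℝ := (1 + t ^ p)⁻¹

lemma polyDecay_pos {t : ℝ} (p : ℝ) (ht : 0 ≤ t) : 0 < polyDecay p t := by
  unfold polyDecay
  have := Real.rpow_nonneg ht p
  positivity

lemma polyDecay_min_le {u v : ℝ} (p : ℝ) (hu : 0 ≤ u) (hv : 0 ≤ v) :
    polyDecay p (min u v) ≤ polyDecay p u + polyDecay p v := by
  rcases min_choice u v with h | h <;> rw [h]
  · linarith [polyDecay_pos p hv]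
  · linarith [polyDecay_pos p hu]

lemma polyDecay_add_le_mul {s u v : ℝ} (hs : 0 ≤ s) (hu : 0 ≤ u) (hv : 0 ≤ v) :
    polyDecay s (u + v) ≤ 2 * polyDecay (s / 2) u * polyDecay (s / 2) v := by
  have hp : 0 ≤ s / 2 := by linarith
  set A := (u + v) ^ (s / 2)
  have hua : u ^ (s / 2) ≤ A := Real.rpow_le_rpow hu (by linarith) hp
  have hva : v ^ (s / 2) ≤ A := Real.rpow_le_rpow hv (by linarith) hp
  have hA : (u + v) ^ s = A ^ 2 := by
    rw [← Real.rpow_natCast, ← Real.rpow_mul (by linarith)]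
    norm_num
  have hu0 := Real.rpow_nonneg hu (s / 2)
  have hv0 := Real.rpow_nonneg hv (s / 2)
  unfold polyDecay
  rw [hA, mul_assoc, ← mul_inv, ← div_eq_mul_inv, le_div_iff₀ (by positivity), inv_mul_eq_div,
    div_le_iff₀ (by positivity)]
  -- `(1 + a)(1 + b) ≤ (1 + A)² ≤ 2 (1 + A²)`
  nlinarith [sq_nonneg (A - 1), mul_le_mul hua hva hv0 (hu0.trans hua)]

lemma summable_polyDecay_int {p : ℝ} (hp : 1 < p) :
    Summable fun z : ℤ => polyDecay p |(z : ℝ)| := by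
  refine Summable.of_norm_bounded_eventually (Real.summable_abs_int_rpow hp) ?_
  filter_upwards [Filter.eventually_cofinite_ne 0] with z hz
  have hpos : 0 < |(z : ℝ)| := abs_pos.mpr (Int.cast_ne_zero.mpr hz)
  rw [Real.norm_of_nonneg (polyDecay_pos p hpos.le).le, Real.rpow_neg hpos.le, polyDecay]
  exact inv_anti₀ (Real.rpow_pos_of_pos hpos p) (le_add_of_nonneg_left zero_le_one)

noncomputable def finDecay (p : ℝ) {N : ℕ} (i j : Fin N) : ℝ :=
  polyDecay p |((i : ℕ) : ℝ) - ((j : ℕ) : ℝ)|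

lemma sum_finDecay_le_tsum {p : ℝ} (hp : 1 < p) {N : ℕ} (i : Fin N) :
    ∑ j, finDecay p i j ≤ ∑' z : ℤ, polyDecay p |(z : ℝ)| := by
  have hinj : Function.Injective fun j : Fin N => ((i : ℕ) : ℤ) - ((j : ℕ) : ℤ) :=
    fun j j' h => Fin.ext (by simpa using h)
  have := tsum_comp_le_tsum_of_inj (summable_polyDecay_int hp)
    (fun z => (polyDecay_pos p (abs_nonneg _)).le) hinj
  rw [tsum_fintype] at this
  simpa [finDecay] using this

lemma dIdx_comm {N : ℕ} (α β : Fin N × Fin N) : dIdx α β = dIdx β α := by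
  unfold dIdx
  rw [abs_sub_comm ((α.1 : ℕ) : ℝ), abs_sub_comm ((α.2 : ℕ) : ℝ), abs_sub_comm ((α.1 : ℕ) : ℝ),
    abs_sub_comm ((α.2 : ℕ) : ℝ), add_comm (|((β.2 : ℕ) : ℝ) - _|)]

lemma polyDecay_dIdx_le {s : ℝ} (hs : 0 ≤ s) {N : ℕ} (α β : Fin N × Fin N) :
    polyDecay s (dIdx α β) ≤ 2 * (finDecay (s / 2) α.1 β.1 * finDecay (s / 2) α.2 β.2)
      + 2 * (finDecay (s / 2) α.2 β.1 * finDecay (s / 2) α.1 β.2) := by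
  unfold dIdx finDecay
  refine (polyDecay_min_le s (by positivity) (by positivity)).trans (add_le_add ?_ ?_)
  · rw [← mul_assoc]
    exact polyDecay_add_le_mul hs (abs_nonneg _) (abs_nonneg _)
  · rw [← mul_assoc, add_comm]
    exact polyDecay_add_le_mul hs (abs_nonneg _) (abs_nonneg _)

lemma sum_polyDecay_dIdx_le {s : ℝ} (hs : 2 < s) {N : ℕ} (α : Fin N × Fin N) :
    ∑ β, polyDecay s (dIdx α β) ≤ 4 * (∑' z : ℤ, polyDecay (s / 2) |(z : ℝ)|) ^ 2 := by
  have hp : 1 < s / 2 := by linarith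
  set S := ∑' z : ℤ, polyDecay (s / 2) |(z : ℝ)|
  have hrow (i : Fin N) : ∑ j, finDecay (s / 2) i j ≤ S := sum_finDecay_le_tsum hp i
  have hnonneg (i : Fin N) : 0 ≤ ∑ j, finDecay (s / 2) i j :=
    Finset.sum_nonneg fun j _ => (polyDecay_pos _ (abs_nonneg _)).le
  calc ∑ β, polyDecay s (dIdx α β)
      ≤ ∑ β : Fin N × Fin N, (2 * (finDecay (s / 2) α.1 β.1 * finDecay (s / 2) α.2 β.2)
          + 2 * (finDecay (s / 2) α.2 β.1 * finDecay (s / 2) α.1 β.2)) :=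
        Finset.sum_le_sum fun β _ => polyDecay_dIdx_le (by linarith) α β
    _ = 2 * ((∑ j, finDecay (s / 2) α.1 j) * ∑ j, finDecay (s / 2) α.2 j)
          + 2 * ((∑ j, finDecay (s / 2) α.2 j) * ∑ j, finDecay (s / 2) α.1 j) := by
        simp only [Fintype.sum_prod_type, Finset.sum_add_distrib, ← Finset.mul_sum,
          ← Finset.sum_mul]
    _ ≤ 2 * (S * S) + 2 * (S * S) := by
        have hS : 0 ≤ S := (hnonneg α.1).trans (hrow α.1)
        gcongr <;> first | exact hrow _ | exact hnonneg _
    _ = 4 * S ^ 2 := by ring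

lemma sum_abs_le_of_abs_le_decay {s Cκ : ℝ} (hs : 2 < s) (hCκ : 0 ≤ Cκ) {N : ℕ}
    (α : Fin N × Fin N) (f : Fin N × Fin N → ℝ) (hf : ∀ β, |f β| ≤ Cκ / (1 + dIdx α β ^ s)) :
    ∑ β, |f β| ≤ Cκ * (4 * (∑' z : ℤ, polyDecay (s / 2) |(z : ℝ)|) ^ 2) :=
  calc ∑ β, |f β| ≤ ∑ β, Cκ * polyDecay s (dIdx α β) := Finset.sum_le_sum fun β _ => hf β
    _ = Cκ * ∑ β, polyDecay s (dIdx α β) := (Finset.mul_sum _ _ _).symm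
    _ ≤ _ := mul_le_mul_of_nonneg_left (sum_polyDecay_dIdx_le hs α) hCκ

lemma sqrt_sum_sq_fst {N : ℕ} (x : Fin N → ℝ) :
    √(∑ α : Fin N × Fin N, x α.1 ^ 2) = √N * eucNorm x := by
  rw [Fintype.sum_prod_type, eucNorm, ← Real.sqrt_mul (Nat.cast_nonneg N), Finset.mul_sum]
  simp

theorem cumulant_two_vectors_two_sums (s Cκ : ℝ) (hs : 2 < s) (hCκ : 0 < Cκ) :
    ∃ C : ℝ, 0 < C ∧ ∀ (N : ℕ) (κ : Fin N × Fin N → Fin N × Fin N → ℝ),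
      (∀ α β, |κ α β| ≤ Cκ / (1 + dIdx α β ^ s)) →
      ∀ (x y : Fin N → ℝ),
        (∑ a2 : Fin N, ∑ a4 : Fin N,
            |∑ a1 : Fin N, ∑ a3 : Fin N, κ (a1, a2) (a3, a4) * x a1 * y a3|
          ≤ C * N * eucNorm x * eucNorm y) ∧
        (∑ a1 : Fin N, ∑ a2 : Fin N, ∑ a3 : Fin N, ∑ a4 : Fin N,
            |κ (a1, a2) (a3, a4)| * |x a1| * |y a3|
          ≤ C * N * eucNorm x * eucNorm y) := by
  set S := ∑' z : ℤ, polyDecay (s / 2) |(z : ℝ)|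
  have hS : 0 < S := (summable_polyDecay_int (by linarith)).tsum_pos
    (fun z => (polyDecay_pos _ (abs_nonneg _)).le) 0 (polyDecay_pos _ (abs_nonneg _))
  refine ⟨Cκ * (4 * S ^ 2), by positivity, fun N κ hκ x y => ?_⟩
  have hsum : ∑ a1 : Fin N, ∑ a2 : Fin N, ∑ a3 : Fin N, ∑ a4 : Fin N,
      |κ (a1, a2) (a3, a4)| * |x a1| * |y a3| ≤ Cκ * (4 * S ^ 2) * N * eucNorm x * eucNorm y := by
    have schur := schur_test (fun α β => |κ α β|) (fun _ _ => abs_nonneg _)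
      (fun α => sum_abs_le_of_abs_le_decay hs hCκ.le α _ (hκ α))
      (fun β => sum_abs_le_of_abs_le_decay hs hCκ.le β _ fun α => dIdx_comm β α ▸ hκ α β)
      (fun α => x α.1) (fun β => y β.1)
    rw [sqrt_sum_sq_fst, sqrt_sum_sq_fst] at schur
    simp only [Fintype.sum_prod_type] at schur
    refine schur.trans_eq ?_
    linear_combination (Cκ * (4 * S ^ 2) * eucNorm x * eucNorm y) *
      Real.mul_self_sqrt (Nat.cast_nonneg (α := ℝ) N)
  refine ⟨le_trans ?_ hsum, hsum⟩
  calc ∑ a2 : Fin N, ∑ a4 : Fin N, |∑ a1 : Fin N, ∑ a3 : Fin N, κ (a1, a2) (a3, a4) * x a1 * y a3|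
      ≤ ∑ a2 : Fin N, ∑ a4 : Fin N, ∑ a1 : Fin N, ∑ a3 : Fin N,
          |κ (a1, a2) (a3, a4)| * |x a1| * |y a3| := by
        gcongr with a2 _ a4 _
        refine (Finset.abs_sum_le_sum_abs _ _).trans (Finset.sum_le_sum fun a1 _ => ?_)
        exact (Finset.abs_sum_le_sum_abs _ _).trans_eq (by simp only [abs_mul])
    _ = ∑ a1 : Fin N, ∑ a2 : Fin N, ∑ a3 : Fin N, ∑ a4 : Fin N,
          |κ (a1, a2) (a3, a4)| * |x a1| * |y a3| :=
        (Finset.sum_congr rfl fun _ _ => Finset.sum_comm).trans <| Finset.sum_comm.trans <|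
          Finset.sum_congr rfl fun _ _ => Finset.sum_congr rfl fun _ _ => Finset.sum_comm
end

section
/- Let M ∈ ℝ^{N×N} and let κ satisfy |κ(α,β)| ≤ C_κ/(1+d(α,β)^s) with s > 2. Define the matrix M̃ by M̃_{a,b} := ∑_{c,e=1}^N M_{c,e} κ((a,c),(e,b)). Then there is a constant C depending only on s and C_κ such that ‖M̃‖ ≤ C·N·‖M‖, where ‖·‖ is the operator norm. -/
open Finset MeasureTheory

/-! ### Auxiliary lemmas -/

private lemma rpow_nn (t p : ℝ) (ht : 0 ≤ t) : (0:ℝ) ≤ t ^ p := Real.rpow_nonneg ht p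

/-- Summability of the basic decay kernel. -/
private lemma Fker_summable {p : ℝ} (hp : 1 < p) :
    Summable (fun k : ℕ => 1 / (1 + (k:ℝ) ^ p)) := by
  rw [← summable_nat_add_iff 1]
  have base : Summable (fun n : ℕ => (((n + 1 : ℕ):ℝ) ^ p)⁻¹) :=
    (summable_nat_add_iff 1).mpr (Real.summable_nat_rpow_inv.mpr hp)
  refine Summable.of_nonneg_of_le (fun k => ?_) (fun k => ?_) base
  · have := rpow_nn ((k + 1 : ℕ):ℝ) p (by positivity)
    positivity
  · have hpos : (0:ℝ) < ((k + 1 : ℕ):ℝ) ^ p :=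
      Real.rpow_pos_of_pos (by positivity) p
    rw [← one_div]
    exact one_div_le_one_div_of_le hpos (by linarith)

/-- Finite sums of the decay kernel over shifted/reflected indices are controlled by the tsum. -/
private lemma sum_decay_le_s8 {p : ℝ} (hp : 1 < p) {N : ℕ} (w : Fin N) :
    ∑ c : Fin N, 1 / (1 + |((c:ℕ):ℝ) - ((w:ℕ):ℝ)| ^ p)
      ≤ 2 * ∑' k : ℕ, 1 / (1 + (k:ℝ) ^ p) := by
  classical
  set F : ℕ → ℝ := fun k => 1 / (1 + (k:ℝ) ^ p) with hF
  have hF0 : ∀ k, 0 ≤ F k := by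
    intro k
    have := rpow_nn (k:ℝ) p (by positivity)
    simp only [hF]
    positivity
  have hsum : Summable F := Fker_summable hp
  have himg : ∀ (t : Finset (Fin N)) (φ : Fin N → ℕ),
      (∀ x ∈ t, ∀ y ∈ t, φ x = φ y → x = y) →
      ∑ c ∈ t, F (φ c) ≤ ∑' k, F k := by
    intro t φ hinj
    rw [← Finset.sum_image (f := F) hinj]
    exact Summable.sum_le_tsum _ (fun _ _ => hF0 _) hsum
  have split := Finset.sum_filter_add_sum_filter_not Finset.univ
    (fun c : Fin N => (w:ℕ) ≤ (c:ℕ))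
    (fun c : Fin N => 1 / (1 + |((c:ℕ):ℝ) - ((w:ℕ):ℝ)| ^ p))
  rw [← split]
  have b1 : ∑ c ∈ Finset.univ.filter (fun c : Fin N => (w:ℕ) ≤ (c:ℕ)),
      (1 / (1 + |((c:ℕ):ℝ) - ((w:ℕ):ℝ)| ^ p)) ≤ ∑' k, F k := by
    have heq : ∀ c ∈ Finset.univ.filter (fun c : Fin N => (w:ℕ) ≤ (c:ℕ)),
        1 / (1 + |((c:ℕ):ℝ) - ((w:ℕ):ℝ)| ^ p) = F ((c:ℕ) - (w:ℕ)) := by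
      intro c hc
      simp only [Finset.mem_filter] at hc
      have h := hc.2
      have habs : |((c:ℕ):ℝ) - ((w:ℕ):ℝ)| = (((c:ℕ) - (w:ℕ) : ℕ):ℝ) := by
        rw [abs_of_nonneg (sub_nonneg.2 (by exact_mod_cast h)), Nat.cast_sub h]
      rw [habs]
    rw [Finset.sum_congr rfl heq]
    apply himg _ (fun c => (c:ℕ) - (w:ℕ))
    intro x hx y hy hxy
    simp only [Finset.mem_filter] at hx hy
    exact Fin.ext (by omega)
  have b2 : ∑ c ∈ Finset.univ.filter (fun c : Fin N => ¬ ((w:ℕ) ≤ (c:ℕ))),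
      (1 / (1 + |((c:ℕ):ℝ) - ((w:ℕ):ℝ)| ^ p)) ≤ ∑' k, F k := by
    have heq : ∀ c ∈ Finset.univ.filter (fun c : Fin N => ¬ ((w:ℕ) ≤ (c:ℕ))),
        1 / (1 + |((c:ℕ):ℝ) - ((w:ℕ):ℝ)| ^ p) = F ((w:ℕ) - (c:ℕ)) := by
      intro c hc
      simp only [Finset.mem_filter] at hc
      have h : (c:ℕ) ≤ (w:ℕ) := by omega
      have habs : |((c:ℕ):ℝ) - ((w:ℕ):ℝ)| = (((w:ℕ) - (c:ℕ) : ℕ):ℝ) := by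
        rw [abs_sub_comm, abs_of_nonneg (sub_nonneg.2 (by exact_mod_cast h)), Nat.cast_sub h]
      rw [habs]
    rw [Finset.sum_congr rfl heq]
    apply himg _ (fun c => (w:ℕ) - (c:ℕ))
    intro x hx y hy hxy
    simp only [Finset.mem_filter] at hx hy
    exact Fin.ext (by omega)
  linarith

/-- min bound: 1/(1+min(A,B)^s) ≤ 1/(1+A^s) + 1/(1+B^s). -/
private lemma min_bound (s A B : ℝ) (hA : 0 ≤ A) (hB : 0 ≤ B) :
    1 / (1 + min A B ^ s) ≤ 1 / (1 + A ^ s) + 1 / (1 + B ^ s) := by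
  have h1 : (0:ℝ) ≤ A ^ s := rpow_nn A s hA
  have h2 : (0:ℝ) ≤ B ^ s := rpow_nn B s hB
  have p1 : (0:ℝ) < 1 + A ^ s := by linarith
  have p2 : (0:ℝ) < 1 + B ^ s := by linarith
  rcases min_choice A B with h | h <;> rw [h]
  · have : (0:ℝ) ≤ 1 / (1 + B ^ s) := by positivity
    linarith
  · have : (0:ℝ) ≤ 1 / (1 + A ^ s) := by positivity
    linarith

/-- factorization bound: 1/(1+(u+v)^s) ≤ 4 · 1/(1+u^(s/2)) · 1/(1+v^(s/2)). -/
private lemma key_bound (s u v : ℝ) (hs : 2 < s) (hu : 0 ≤ u) (hv : 0 ≤ v) :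
    1 / (1 + (u + v) ^ s)
      ≤ 4 * (1 / (1 + u ^ (s/2)) * (1 / (1 + v ^ (s/2)))) := by
  have hs0 : (0:ℝ) < s := by linarith
  have h1 : (0:ℝ) ≤ u ^ (s/2) := rpow_nn u _ hu
  have h2 : (0:ℝ) ≤ v ^ (s/2) := rpow_nn v _ hv
  have h3 : (0:ℝ) ≤ (u + v) ^ s := rpow_nn _ _ (by linarith)
  have hD1 : (0:ℝ) < 1 + u ^ (s/2) := by linarith
  have hD2 : (0:ℝ) < 1 + v ^ (s/2) := by linarith
  have hD : (0:ℝ) < 1 + (u + v) ^ s := by linarith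
  have hAterm : ∀ w z : ℝ, 0 ≤ w → 0 ≤ z → w ^ (s/2) ≤ 1 + (w + z) ^ s := by
    intro w z hw hz
    rcases le_or_gt w 1 with hw1 | hw1
    · have := Real.rpow_le_one hw hw1 (by linarith : (0:ℝ) ≤ s/2)
      have := rpow_nn (w + z) s (by linarith)
      linarith
    · have e1 : w ^ (s/2) ≤ w ^ s :=
        Real.rpow_le_rpow_of_exponent_le hw1.le (by linarith)
      have e2 : w ^ s ≤ (w + z) ^ s :=
        Real.rpow_le_rpow hw (by linarith) hs0.le
      linarith
  have hA := hAterm u v hu hv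
  have hB' := hAterm v u hv hu
  have hB : v ^ (s/2) ≤ 1 + (u + v) ^ s := by
    rw [add_comm u v]; exact hB'
  have hC : u ^ (s/2) * v ^ (s/2) ≤ (u + v) ^ s := by
    rw [← Real.mul_rpow hu hv]
    have huv : 0 ≤ u * v := mul_nonneg hu hv
    have step : u * v ≤ (u + v) ^ (2:ℝ) := by
      rw [show ((2:ℝ)) = ((2:ℕ):ℝ) by norm_num, Real.rpow_natCast]
      nlinarith
    calc (u * v) ^ (s/2) ≤ ((u + v) ^ (2:ℝ)) ^ (s/2) :=
          Real.rpow_le_rpow huv step (by linarith)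
      _ = (u + v) ^ ((2:ℝ) * (s/2)) := by
          rw [← Real.rpow_mul (by linarith : (0:ℝ) ≤ u + v)]
      _ = (u + v) ^ s := by rw [show (2:ℝ) * (s/2) = s by ring]
  have key : (1 + u ^ (s/2)) * (1 + v ^ (s/2)) ≤ 4 * (1 + (u + v) ^ s) := by
    nlinarith
  calc 1 / (1 + (u + v) ^ s)
      ≤ 4 / ((1 + u ^ (s/2)) * (1 + v ^ (s/2))) := by
        rw [div_le_div_iff₀ hD (by positivity)]
        nlinarith
    _ = 4 * (1 / (1 + u ^ (s/2)) * (1 / (1 + v ^ (s/2)))) := by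
        rw [one_div_mul_one_div, mul_one_div]

/-- Schur test for the Euclidean norm. -/
private lemma schur_bound {N : ℕ} (A : Fin N → Fin N → ℝ) (R : ℝ) (hR : 0 ≤ R)
    (hrow : ∀ a, ∑ b, |A a b| ≤ R) (hcol : ∀ b, ∑ a, |A a b| ≤ R) (x : Fin N → ℝ) :
    eucNorm (fun a => ∑ b, A a b * x b) ≤ R * eucNorm x := by
  have habs : ∀ a b, (0:ℝ) ≤ |A a b| := fun a b => abs_nonneg _
  have key : ∑ a, (∑ b, A a b * x b) ^ 2 ≤ R ^ 2 * ∑ b, x b ^ 2 := by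
    have step1 : ∀ a, (∑ b, A a b * x b) ^ 2 ≤ R * ∑ b, |A a b| * x b ^ 2 := by
      intro a
      have e1 : (∑ b, A a b * x b) ^ 2 ≤ (∑ b, |A a b| * |x b|) ^ 2 := by
        have habs2 : |∑ b, A a b * x b| ≤ ∑ b, |A a b| * |x b| := by
          refine le_trans (Finset.abs_sum_le_sum_abs _ _) (le_of_eq ?_)
          exact Finset.sum_congr rfl fun b _ => abs_mul _ _
        calc (∑ b, A a b * x b) ^ 2 = |∑ b, A a b * x b| ^ 2 := (sq_abs _).symm
          _ ≤ (∑ b, |A a b| * |x b|) ^ 2 := by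
              exact pow_le_pow_left₀ (abs_nonneg _) habs2 2
      have e2 : (∑ b, |A a b| * |x b|) ^ 2
          ≤ (∑ b, |A a b|) * (∑ b, |A a b| * x b ^ 2) := by
        calc (∑ b, |A a b| * |x b|) ^ 2
            = (∑ b, Real.sqrt |A a b| * (Real.sqrt |A a b| * |x b|)) ^ 2 := by
              congr 1
              refine Finset.sum_congr rfl fun b _ => ?_
              rw [← mul_assoc, Real.mul_self_sqrt (habs a b)]
          _ ≤ (∑ b, Real.sqrt |A a b| ^ 2) * (∑ b, (Real.sqrt |A a b| * |x b|) ^ 2) :=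
              Finset.sum_mul_sq_le_sq_mul_sq _ _ _
          _ = (∑ b, |A a b|) * (∑ b, |A a b| * x b ^ 2) := by
              congr 1
              · exact Finset.sum_congr rfl fun b _ => Real.sq_sqrt (habs a b)
              · refine Finset.sum_congr rfl fun b _ => ?_
                rw [mul_pow, Real.sq_sqrt (habs a b), sq_abs]
      have e3 : (∑ b, |A a b|) * (∑ b, |A a b| * x b ^ 2)
          ≤ R * (∑ b, |A a b| * x b ^ 2) :=
        mul_le_mul_of_nonneg_right (hrow a)
          (Finset.sum_nonneg fun b _ => mul_nonneg (habs a b) (sq_nonneg _))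
      linarith
    calc ∑ a, (∑ b, A a b * x b) ^ 2
        ≤ ∑ a, R * ∑ b, |A a b| * x b ^ 2 := Finset.sum_le_sum fun a _ => step1 a
      _ = R * ∑ b, (∑ a, |A a b|) * x b ^ 2 := by
          rw [← Finset.mul_sum]
          congr 1
          rw [Finset.sum_comm]
          exact Finset.sum_congr rfl fun b _ => (Finset.sum_mul _ _ _).symm
      _ ≤ R * ∑ b, R * x b ^ 2 := by
          refine mul_le_mul_of_nonneg_left (Finset.sum_le_sum fun b _ => ?_) hR
          exact mul_le_mul_of_nonneg_right (hcol b) (sq_nonneg _)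
      _ = R ^ 2 * ∑ b, x b ^ 2 := by rw [← Finset.mul_sum]; ring
  simp only [eucNorm]
  calc Real.sqrt (∑ a, (∑ b, A a b * x b) ^ 2)
      ≤ Real.sqrt (R ^ 2 * ∑ b, x b ^ 2) := Real.sqrt_le_sqrt key
    _ = R * Real.sqrt (∑ b, x b ^ 2) := by
        rw [Real.sqrt_mul (sq_nonneg R), Real.sqrt_sq hR]

theorem wrapped_matrix_norm_bound (s Cκ : ℝ) (hs : 2 < s) (hCκ : 0 < Cκ) :
    ∃ C : ℝ, 0 < C ∧ ∀ (N : ℕ) (M : Matrix (Fin N) (Fin N) ℝ)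
      (κ : Fin N × Fin N → Fin N × Fin N → ℝ),
      (∀ α β, |κ α β| ≤ Cκ / (1 + dIdx α β ^ s)) →
      ∀ opM : ℝ, (∀ x : Fin N → ℝ, eucNorm (M.mulVec x) ≤ opM * eucNorm x) →
      ∀ x : Fin N → ℝ,
        eucNorm (fun a => ∑ b : Fin N,
            (∑ c : Fin N, ∑ e : Fin N, M c e * κ (a, c) (e, b)) * x b)
          ≤ C * N * opM * eucNorm x := by
  set p : ℝ := s / 2 with hpdef
  have hp : 1 < p := by rw [hpdef]; linarith
  have hp0 : 0 < p := by linarith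
  set T : ℝ := ∑' k : ℕ, 1 / (1 + (k:ℝ) ^ p) with hTdef
  have hsumF : Summable (fun k : ℕ => 1 / (1 + (k:ℝ) ^ p)) := Fker_summable hp
  have hF0 : ∀ k : ℕ, (0:ℝ) ≤ 1 / (1 + (k:ℝ) ^ p) := by
    intro k
    have := rpow_nn (k:ℝ) p (by positivity)
    positivity
  have hT1 : 1 ≤ T := by
    have h0 := Summable.le_tsum hsumF 0 (fun j _ => hF0 j)
    have : (1:ℝ) / (1 + ((0:ℕ):ℝ) ^ p) = 1 := by
      rw [Nat.cast_zero, Real.zero_rpow (ne_of_gt hp0)]; norm_num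
    rw [hTdef]; rw [this] at h0; exact h0
  have hT0 : 0 < T := by linarith
  refine ⟨32 * Cκ * T ^ 2, by positivity, ?_⟩
  intro N M κ hκ opM hM x
  rcases Nat.eq_zero_or_pos N with hN | hN
  · subst hN
    simp [eucNorm]
  -- N ≥ 1
  set fA : Fin N → Fin N → ℝ :=
    fun i j => 1 / (1 + |((i:ℕ):ℝ) - ((j:ℕ):ℝ)| ^ p) with hfAdef
  have hfA0 : ∀ i j, (0:ℝ) ≤ fA i j := by
    intro i j
    have := rpow_nn |((i:ℕ):ℝ) - ((j:ℕ):ℝ)| p (abs_nonneg _)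
    simp only [hfAdef]
    positivity
  have hAsum : ∀ w : Fin N, ∑ i, fA i w ≤ 2 * T := fun w => sum_decay_le_s8 hp w
  have hBsum : ∀ w : Fin N, ∑ i, fA w i ≤ 2 * T := by
    intro w
    have : ∑ i, fA w i = ∑ i, fA i w :=
      Finset.sum_congr rfl fun i _ => by simp only [hfAdef]; rw [abs_sub_comm]
    rw [this]; exact hAsum w
  have hCE : ∑ c : Fin N, ∑ e : Fin N, fA c e ≤ (N:ℝ) * (2 * T) := by
    calc ∑ c : Fin N, ∑ e : Fin N, fA c e ≤ ∑ _c : Fin N, 2 * T :=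
          Finset.sum_le_sum fun c _ => hBsum c
      _ = (N:ℝ) * (2 * T) := by
          rw [Finset.sum_const, Finset.card_univ, Fintype.card_fin, nsmul_eq_mul]
  -- opM nonneg
  have hop0 : 0 ≤ opM := by
    set e0 : Fin N := ⟨0, hN⟩
    have hy : eucNorm (Pi.single e0 (1:ℝ)) = 1 := by
      simp only [eucNorm, Pi.single_apply]
      rw [show (∑ i : Fin N, (if i = e0 then (1:ℝ) else 0) ^ 2)
          = ∑ i : Fin N, (if i = e0 then (1:ℝ) else 0) from
        Finset.sum_congr rfl fun i _ => by split <;> norm_num]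
      rw [Finset.sum_ite_eq' Finset.univ e0 (fun _ => (1:ℝ))]
      simp
    have h1 := hM (Pi.single e0 (1:ℝ))
    rw [hy, mul_one] at h1
    have h2 : 0 ≤ eucNorm (M.mulVec (Pi.single e0 (1:ℝ))) := Real.sqrt_nonneg _
    linarith
  -- entry bound
  have hMe : ∀ c e : Fin N, |M c e| ≤ opM := by
    intro c e
    set y : Fin N → ℝ := Pi.single e (1:ℝ) with hydef
    have hy : eucNorm y = 1 := by
      simp only [eucNorm, hydef, Pi.single_apply]
      rw [show (∑ i : Fin N, (if i = e then (1:ℝ) else 0) ^ 2)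
          = ∑ i : Fin N, (if i = e then (1:ℝ) else 0) from
        Finset.sum_congr rfl fun i _ => by split <;> norm_num]
      rw [Finset.sum_ite_eq' Finset.univ e (fun _ => (1:ℝ))]
      simp
    have hmv : M.mulVec y c = M c e := by
      simp only [Matrix.mulVec, dotProduct, hydef, Pi.single_apply,
        mul_ite, mul_one, mul_zero]
      rw [Finset.sum_ite_eq' Finset.univ e (fun b => M c b)]
      simp
    have h1 : |M c e| ≤ eucNorm (M.mulVec y) := by
      rw [show |M c e| = Real.sqrt ((M c e) ^ 2) from (Real.sqrt_sq_eq_abs _).symm]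
      apply Real.sqrt_le_sqrt
      rw [← hmv]
      exact Finset.single_le_sum (f := fun i => (M.mulVec y i) ^ 2)
        (fun i _ => sq_nonneg _) (Finset.mem_univ c)
    have h2 := hM y
    rw [hy, mul_one] at h2
    linarith
  -- kernel bound
  have hker : ∀ a b c e : Fin N, |κ (a, c) (e, b)|
      ≤ 4 * Cκ * (fA a e * fA c b + fA a b * fA c e) := by
    intro a b c e
    have h0 := hκ (a, c) (e, b)
    have hd : dIdx (a, c) (e, b)
        = min (|((a:ℕ):ℝ) - ((e:ℕ):ℝ)| + |((c:ℕ):ℝ) - ((b:ℕ):ℝ)|)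
              (|((a:ℕ):ℝ) - ((b:ℕ):ℝ)| + |((c:ℕ):ℝ) - ((e:ℕ):ℝ)|) := rfl
    set u1 := |((a:ℕ):ℝ) - ((e:ℕ):ℝ)| with hu1
    set v1 := |((c:ℕ):ℝ) - ((b:ℕ):ℝ)| with hv1
    set u2 := |((a:ℕ):ℝ) - ((b:ℕ):ℝ)| with hu2
    set v2 := |((c:ℕ):ℝ) - ((e:ℕ):ℝ)| with hv2
    have hu1n : 0 ≤ u1 := abs_nonneg _
    have hv1n : 0 ≤ v1 := abs_nonneg _
    have hu2n : 0 ≤ u2 := abs_nonneg _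
    have hv2n : 0 ≤ v2 := abs_nonneg _
    have hmin : 1 / (1 + dIdx (a, c) (e, b) ^ s)
        ≤ 1 / (1 + (u1 + v1) ^ s) + 1 / (1 + (u2 + v2) ^ s) := by
      rw [hd]
      exact min_bound s (u1 + v1) (u2 + v2) (by linarith) (by linarith)
    have hk1 := key_bound s u1 v1 hs hu1n hv1n
    have hk2 := key_bound s u2 v2 hs hu2n hv2n
    have hfa1 : fA a e = 1 / (1 + u1 ^ p) := rfl
    have hfa2 : fA c b = 1 / (1 + v1 ^ p) := rfl
    have hfa3 : fA a b = 1 / (1 + u2 ^ p) := rfl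
    have hfa4 : fA c e = 1 / (1 + v2 ^ p) := rfl
    calc |κ (a, c) (e, b)| ≤ Cκ / (1 + dIdx (a, c) (e, b) ^ s) := h0
      _ = Cκ * (1 / (1 + dIdx (a, c) (e, b) ^ s)) := by rw [mul_one_div]
      _ ≤ Cκ * (1 / (1 + (u1 + v1) ^ s) + 1 / (1 + (u2 + v2) ^ s)) :=
          mul_le_mul_of_nonneg_left hmin hCκ.le
      _ ≤ Cκ * (4 * (1 / (1 + u1 ^ p) * (1 / (1 + v1 ^ p)))
              + 4 * (1 / (1 + u2 ^ p) * (1 / (1 + v2 ^ p)))) := by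
          apply mul_le_mul_of_nonneg_left _ hCκ.le
          rw [hpdef]
          exact add_le_add hk1 hk2
      _ = 4 * Cκ * (fA a e * fA c b + fA a b * fA c e) := by
          rw [hfa1, hfa2, hfa3, hfa4]; ring
  -- triple sum bounds
  have hS1 : ∀ a : Fin N, ∑ b : Fin N, ∑ c : Fin N, ∑ e : Fin N, fA a e * fA c b
      ≤ (N:ℝ) * (2 * T * (2 * T)) := by
    intro a
    have mid : ∀ b : Fin N, ∑ c : Fin N, ∑ e : Fin N, fA a e * fA c b
        ≤ 2 * T * (2 * T) := by
      intro b
      calc ∑ c : Fin N, ∑ e : Fin N, fA a e * fA c b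
          ≤ ∑ c : Fin N, 2 * T * fA c b := by
            refine Finset.sum_le_sum fun c _ => ?_
            rw [← Finset.sum_mul]
            exact mul_le_mul_of_nonneg_right (hBsum a) (hfA0 c b)
        _ = 2 * T * ∑ c : Fin N, fA c b := by rw [Finset.mul_sum]
        _ ≤ 2 * T * (2 * T) :=
            mul_le_mul_of_nonneg_left (hAsum b) (by linarith)
    calc ∑ b : Fin N, ∑ c : Fin N, ∑ e : Fin N, fA a e * fA c b
        ≤ ∑ _b : Fin N, 2 * T * (2 * T) := Finset.sum_le_sum fun b _ => mid b
      _ = (N:ℝ) * (2 * T * (2 * T)) := by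
          rw [Finset.sum_const, Finset.card_univ, Fintype.card_fin, nsmul_eq_mul]
  have hS2 : ∀ a : Fin N, ∑ b : Fin N, ∑ c : Fin N, ∑ e : Fin N, fA a b * fA c e
      ≤ (N:ℝ) * (2 * T * (2 * T)) := by
    intro a
    calc ∑ b : Fin N, ∑ c : Fin N, ∑ e : Fin N, fA a b * fA c e
        = ∑ b : Fin N, fA a b * (∑ c : Fin N, ∑ e : Fin N, fA c e) := by
          refine Finset.sum_congr rfl fun b _ => ?_
          rw [Finset.mul_sum]
          exact Finset.sum_congr rfl fun c _ => (Finset.mul_sum _ _ _).symm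
      _ ≤ ∑ b : Fin N, fA a b * ((N:ℝ) * (2 * T)) := by
          refine Finset.sum_le_sum fun b _ => ?_
          exact mul_le_mul_of_nonneg_left hCE (hfA0 a b)
      _ = (∑ b : Fin N, fA a b) * ((N:ℝ) * (2 * T)) := by rw [Finset.sum_mul]
      _ ≤ 2 * T * ((N:ℝ) * (2 * T)) := by
          refine mul_le_mul_of_nonneg_right (hBsum a) ?_
          have : (0:ℝ) ≤ (N:ℝ) := Nat.cast_nonneg N
          positivity
      _ = (N:ℝ) * (2 * T * (2 * T)) := by ring
  have hS1' : ∀ b : Fin N, ∑ a : Fin N, ∑ c : Fin N, ∑ e : Fin N, fA a e * fA c b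
      ≤ (N:ℝ) * (2 * T * (2 * T)) := by
    intro b
    have mid : ∀ a : Fin N, ∑ c : Fin N, ∑ e : Fin N, fA a e * fA c b
        ≤ 2 * T * (2 * T) := by
      intro a
      calc ∑ c : Fin N, ∑ e : Fin N, fA a e * fA c b
          ≤ ∑ c : Fin N, 2 * T * fA c b := by
            refine Finset.sum_le_sum fun c _ => ?_
            rw [← Finset.sum_mul]
            exact mul_le_mul_of_nonneg_right (hBsum a) (hfA0 c b)
        _ = 2 * T * ∑ c : Fin N, fA c b := by rw [Finset.mul_sum]
        _ ≤ 2 * T * (2 * T) :=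
            mul_le_mul_of_nonneg_left (hAsum b) (by linarith)
    calc ∑ a : Fin N, ∑ c : Fin N, ∑ e : Fin N, fA a e * fA c b
        ≤ ∑ _a : Fin N, 2 * T * (2 * T) := Finset.sum_le_sum fun a _ => mid a
      _ = (N:ℝ) * (2 * T * (2 * T)) := by
          rw [Finset.sum_const, Finset.card_univ, Fintype.card_fin, nsmul_eq_mul]
  have hS2' : ∀ b : Fin N, ∑ a : Fin N, ∑ c : Fin N, ∑ e : Fin N, fA a b * fA c e
      ≤ (N:ℝ) * (2 * T * (2 * T)) := by
    intro b
    calc ∑ a : Fin N, ∑ c : Fin N, ∑ e : Fin N, fA a b * fA c e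
        = ∑ a : Fin N, fA a b * (∑ c : Fin N, ∑ e : Fin N, fA c e) := by
          refine Finset.sum_congr rfl fun a _ => ?_
          rw [Finset.mul_sum]
          exact Finset.sum_congr rfl fun c _ => (Finset.mul_sum _ _ _).symm
      _ ≤ ∑ a : Fin N, fA a b * ((N:ℝ) * (2 * T)) := by
          refine Finset.sum_le_sum fun a _ => ?_
          exact mul_le_mul_of_nonneg_left hCE (hfA0 a b)
      _ = (∑ a : Fin N, fA a b) * ((N:ℝ) * (2 * T)) := by rw [Finset.sum_mul]
      _ ≤ 2 * T * ((N:ℝ) * (2 * T)) := by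
          refine mul_le_mul_of_nonneg_right (hAsum b) ?_
          have : (0:ℝ) ≤ (N:ℝ) := Nat.cast_nonneg N
          positivity
      _ = (N:ℝ) * (2 * T * (2 * T)) := by ring
  -- matrix entries
  set G : Fin N → Fin N → ℝ :=
    fun a b => ∑ c : Fin N, ∑ e : Fin N, M c e * κ (a, c) (e, b) with hGdef
  have hGabs : ∀ a b : Fin N, |G a b|
      ≤ ∑ c : Fin N, ∑ e : Fin N, (4 * Cκ * opM) * (fA a e * fA c b + fA a b * fA c e) := by
    intro a b
    calc |G a b| ≤ ∑ c : Fin N, ∑ e : Fin N, |M c e * κ (a, c) (e, b)| := by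
          refine le_trans (Finset.abs_sum_le_sum_abs _ _) ?_
          exact Finset.sum_le_sum fun c _ => Finset.abs_sum_le_sum_abs _ _
      _ ≤ ∑ c : Fin N, ∑ e : Fin N, (4 * Cκ * opM) * (fA a e * fA c b + fA a b * fA c e) := by
          refine Finset.sum_le_sum fun c _ => Finset.sum_le_sum fun e _ => ?_
          rw [abs_mul]
          have h1 := hMe c e
          have h2 := hker a b c e
          have hnn : (0:ℝ) ≤ 4 * Cκ * (fA a e * fA c b + fA a b * fA c e) := by
            have := hfA0 a e; have := hfA0 c b; have := hfA0 a b; have := hfA0 c e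
            positivity
          calc |M c e| * |κ (a, c) (e, b)|
              ≤ opM * (4 * Cκ * (fA a e * fA c b + fA a b * fA c e)) :=
                mul_le_mul h1 h2 (abs_nonneg _) hop0
            _ = (4 * Cκ * opM) * (fA a e * fA c b + fA a b * fA c e) := by ring
  have hrowG : ∀ a : Fin N, ∑ b : Fin N, |G a b| ≤ 32 * Cκ * T ^ 2 * N * opM := by
    intro a
    calc ∑ b : Fin N, |G a b|
        ≤ ∑ b : Fin N, ∑ c : Fin N, ∑ e : Fin N,
            (4 * Cκ * opM) * (fA a e * fA c b + fA a b * fA c e) :=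
          Finset.sum_le_sum fun b _ => hGabs a b
      _ = (4 * Cκ * opM) * ∑ b : Fin N, ∑ c : Fin N, ∑ e : Fin N,
            (fA a e * fA c b + fA a b * fA c e) := by
          simp only [← Finset.mul_sum]
      _ ≤ (4 * Cκ * opM) * ((N:ℝ) * (2 * T * (2 * T)) + (N:ℝ) * (2 * T * (2 * T))) := by
          refine mul_le_mul_of_nonneg_left ?_ (by positivity)
          simp only [Finset.sum_add_distrib]
          exact add_le_add (hS1 a) (hS2 a)
      _ = 32 * Cκ * T ^ 2 * N * opM := by ring
  have hcolG : ∀ b : Fin N, ∑ a : Fin N, |G a b| ≤ 32 * Cκ * T ^ 2 * N * opM := by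
    intro b
    calc ∑ a : Fin N, |G a b|
        ≤ ∑ a : Fin N, ∑ c : Fin N, ∑ e : Fin N,
            (4 * Cκ * opM) * (fA a e * fA c b + fA a b * fA c e) :=
          Finset.sum_le_sum fun a _ => hGabs a b
      _ = (4 * Cκ * opM) * ∑ a : Fin N, ∑ c : Fin N, ∑ e : Fin N,
            (fA a e * fA c b + fA a b * fA c e) := by
          simp only [← Finset.mul_sum]
      _ ≤ (4 * Cκ * opM) * ((N:ℝ) * (2 * T * (2 * T)) + (N:ℝ) * (2 * T * (2 * T))) := by
          refine mul_le_mul_of_nonneg_left ?_ (by positivity)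
          simp only [Finset.sum_add_distrib]
          exact add_le_add (hS1' b) (hS2' b)
      _ = 32 * Cκ * T ^ 2 * N * opM := by ring
  have hRnn : (0:ℝ) ≤ 32 * Cκ * T ^ 2 * N * opM := by
    have : (0:ℝ) ≤ (N:ℝ) := Nat.cast_nonneg N
    positivity
  have final := schur_bound G (32 * Cκ * T ^ 2 * N * opM) hRnn hrowG hcolG x
  calc eucNorm (fun a => ∑ b : Fin N,
          (∑ c : Fin N, ∑ e : Fin N, M c e * κ (a, c) (e, b)) * x b)
      ≤ 32 * Cκ * T ^ 2 * N * opM * eucNorm x := final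
    _ = 32 * Cκ * T ^ 2 * N * opM * eucNorm x := rfl
end

section
/- Let κ₂ satisfy |κ₂(α,β)| ≤ C_κ/(1+d(α,β)^s) with s > 2, and suppose the 3-cumulant bound |κ₃(α,β,γ)| ≤ C₃·∏_{e∈T_min} |κ₂(e)| holds, where T_min is the minimal spanning tree on the three index pairs α,β,γ with edge weights d. Then there exists C (depending on s, C_κ, C₃) such that for all N and all fixed a5, a6: ∑_{a1,a2,a3,a4=1}^N |κ₃((a1,a2),(a3,a4),(a5,a6))| ≤ C. -/
open Finset MeasureTheory

lemma dIdx_nonneg {N : ℕ} (a b : Fin N × Fin N) : 0 ≤ dIdx a b := by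
  unfold dIdx
  exact le_min (by positivity) (by positivity)

lemma dIdx_symm {N : ℕ} (a b : Fin N × Fin N) : dIdx a b = dIdx b a := by
  unfold dIdx
  rw [abs_sub_comm ((a.1:ℕ):ℝ) ((b.1:ℕ):ℝ), abs_sub_comm ((a.2:ℕ):ℝ) ((b.2:ℕ):ℝ),
    abs_sub_comm ((a.1:ℕ):ℝ) ((b.2:ℕ):ℝ), abs_sub_comm ((a.2:ℕ):ℝ) ((b.1:ℕ):ℝ),
    add_comm (|((b.2:ℕ):ℝ) - ((a.1:ℕ):ℝ)|)]

/-- separation inequality -/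
lemma aux_sep {s : ℝ} (hs : 2 < s) {p q : ℝ} (hp : 0 ≤ p) (hq : 0 ≤ q) :
    1 / (1 + (p + q) ^ s) ≤ 3 * (1 / (1 + p ^ (s/2)) * (1 / (1 + q ^ (s/2)))) := by
  have hs0 : (0:ℝ) < s := by linarith
  have ht0 : (0:ℝ) < s/2 := by linarith
  have hpq : (0:ℝ) ≤ p + q := by linarith
  have key : ∀ x : ℝ, 0 ≤ x → x ≤ p + q → x ^ (s/2) ≤ 1 + (p+q)^s := by
    intro x hx hxle
    rcases le_total x 1 with h1 | h1
    · have := Real.rpow_le_one hx h1 ht0.le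
      have : (0:ℝ) ≤ (p+q)^s := Real.rpow_nonneg hpq s
      linarith [Real.rpow_le_one hx h1 ht0.le]
    · calc x ^ (s/2) ≤ x ^ s := Real.rpow_le_rpow_of_exponent_le h1 (by linarith)
        _ ≤ (p+q) ^ s := Real.rpow_le_rpow hx hxle hs0.le
        _ ≤ 1 + (p+q)^s := by linarith
  have hps := key p hp (by linarith)
  have hqs := key q hq (by linarith)
  have hpqs : p ^ (s/2) * q ^ (s/2) ≤ (p+q)^s := by
    rw [← Real.mul_rpow hp hq]
    have h1 : p * q ≤ (p+q) ^ (2:ℝ) := by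
      rw [Real.rpow_two]; nlinarith
    calc (p*q) ^ (s/2) ≤ ((p+q)^(2:ℝ)) ^ (s/2) :=
          Real.rpow_le_rpow (by positivity) h1 ht0.le
      _ = (p+q) ^ s := by
          rw [← Real.rpow_mul hpq]; congr 1; ring
  have hmul : (1 + p ^ (s/2)) * (1 + q ^ (s/2)) ≤ 3 * (1 + (p+q)^s) := by
    have h1 : (0:ℝ) ≤ p ^ (s/2) := Real.rpow_nonneg hp _
    have h2 : (0:ℝ) ≤ q ^ (s/2) := Real.rpow_nonneg hq _
    nlinarith
  have hA : (0:ℝ) < 1 + (p+q)^s := by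
    have := Real.rpow_nonneg hpq s; linarith
  have hB1 : (0:ℝ) < 1 + p ^ (s/2) := by have := Real.rpow_nonneg hp (s/2); linarith
  have hB2 : (0:ℝ) < 1 + q ^ (s/2) := by have := Real.rpow_nonneg hq (s/2); linarith
  rw [show (3:ℝ) * (1 / (1 + p ^ (s/2)) * (1 / (1 + q ^ (s/2)))) =
      3 / ((1 + p ^ (s/2)) * (1 + q ^ (s/2))) by field_simp]
  rw [div_le_div_iff₀ hA (by positivity)]
  linarith

/-- one-dimensional summability bound -/
lemma oneD_bound {t : ℝ} (ht : 1 < t) :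
    ∃ K : ℝ, 1 ≤ K ∧ ∀ (N : ℕ) (c : ℕ),
      ∑ a : Fin N, 1 / (1 + |((a:ℕ):ℝ) - (c:ℝ)| ^ t) ≤ K := by
  set g : ℤ → ℝ := fun n => 1 / (1 + |(n:ℝ)| ^ t) with hg
  have hgnn : ∀ n, 0 ≤ g n := by
    intro n; have := Real.rpow_nonneg (abs_nonneg ((n:ℤ):ℝ)) t; positivity
  have hsum : Summable g := by
    have h1 : Summable (fun n : ℤ => |(n:ℝ)| ^ (-t)) := Real.summable_abs_int_rpow ht
    have h2 : Summable (fun n : ℤ => if n = 0 then (1:ℝ) else 0) := by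
      apply summable_of_ne_finset_zero (s := {0})
      intro b hb
      simp only [Finset.mem_singleton] at hb
      simp [hb]
    apply Summable.of_nonneg_of_le hgnn _ (h1.add h2)
    intro n
    rcases eq_or_ne n 0 with rfl | hn
    · simp [hg, Real.zero_rpow (show t ≠ 0 by linarith),
        Real.zero_rpow (show -t ≠ 0 by intro h; simp at h; linarith)]
    · have h1 : (1:ℝ) ≤ |(n:ℝ)| := by
        rw [← Int.cast_abs]
        exact_mod_cast Int.one_le_abs (by exact_mod_cast hn)
      have hpos : (0:ℝ) < |(n:ℝ)| ^ t := Real.rpow_pos_of_pos (by linarith) t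
      have : g n ≤ |(n:ℝ)| ^ (-t) := by
        rw [Real.rpow_neg (abs_nonneg _), hg]
        simp only
        rw [one_div, inv_le_inv₀ (by linarith) hpos]
        linarith
      simp only [hn, if_false, add_zero]
      exact this
  refine ⟨∑' n, g n, ?_, ?_⟩
  · have h0 : g 0 = 1 := by simp [hg, Real.zero_rpow (by linarith : t ≠ 0)]
    have := Summable.le_tsum hsum 0 (fun j _ => hgnn j)
    linarith
  · intro N c
    have hrw : ∀ a : Fin N, 1 / (1 + |((a:ℕ):ℝ) - (c:ℝ)| ^ t) = g ((a:ℤ) - (c:ℤ)) := by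
      intro a
      simp only [hg]
      congr 3
      push_cast
      ring
    rw [Finset.sum_congr rfl (fun a _ => hrw a)]
    have hinj : Function.Injective (fun a : Fin N => (a:ℤ) - (c:ℤ)) := by
      intro x y h
      simp only at h
      have hxy : ((x:ℕ):ℤ) = ((y:ℕ):ℤ) := by linarith
      exact Fin.ext (by exact_mod_cast hxy)
    rw [← Finset.sum_image (g := fun a : Fin N => (a:ℤ) - (c:ℤ)) (f := g)
      (fun x _ y _ h => hinj h)]
    exact Summable.sum_le_tsum _ (fun i _ => hgnn i) hsum

/-- two-dimensional bound -/
lemma twoD_bound {s : ℝ} (hs : 2 < s) :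
    ∃ S : ℝ, 0 < S ∧ ∀ (N : ℕ) (γ : Fin N × Fin N),
      ∑ α : Fin N × Fin N, 1 / (1 + dIdx α γ ^ s) ≤ S := by
  have ht : 1 < s/2 := by linarith
  obtain ⟨K, hK1, hKb⟩ := oneD_bound ht
  have hK0 : (0:ℝ) < K := by linarith
  refine ⟨6*K^2, by positivity, ?_⟩
  intro N γ
  set f : Fin N → Fin N → ℝ := fun a c => 1 / (1 + |((a:ℕ):ℝ) - ((c:ℕ):ℝ)| ^ (s/2)) with hf
  have hfnn : ∀ a c, 0 ≤ f a c := by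
    intro a c
    have := Real.rpow_nonneg (abs_nonneg (((a:ℕ):ℝ) - ((c:ℕ):ℝ))) (s/2)
    positivity
  have hfK : ∀ c : Fin N, ∑ a : Fin N, f a c ≤ K := fun c => hKb N c
  have hpt : ∀ α : Fin N × Fin N,
      1 / (1 + dIdx α γ ^ s) ≤ 3 * (f α.1 γ.1 * f α.2 γ.2) + 3 * (f α.1 γ.2 * f α.2 γ.1) := by
    intro α
    set u := |((α.1:ℕ):ℝ) - ((γ.1:ℕ):ℝ)| + |((α.2:ℕ):ℝ) - ((γ.2:ℕ):ℝ)| with hu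
    set v := |((α.1:ℕ):ℝ) - ((γ.2:ℕ):ℝ)| + |((α.2:ℕ):ℝ) - ((γ.1:ℕ):ℝ)| with hv
    have hu0 : 0 ≤ u := by positivity
    have hv0 : 0 ≤ v := by positivity
    have hd : dIdx α γ = min u v := rfl
    have e1 : 1 / (1 + u ^ s) ≤ 3 * (f α.1 γ.1 * f α.2 γ.2) := by
      have := aux_sep hs (abs_nonneg (((α.1:ℕ):ℝ) - ((γ.1:ℕ):ℝ)))
        (abs_nonneg (((α.2:ℕ):ℝ) - ((γ.2:ℕ):ℝ)))
      simpa [hf, hu, mul_assoc] using this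
    have e2 : 1 / (1 + v ^ s) ≤ 3 * (f α.1 γ.2 * f α.2 γ.1) := by
      have := aux_sep hs (abs_nonneg (((α.1:ℕ):ℝ) - ((γ.2:ℕ):ℝ)))
        (abs_nonneg (((α.2:ℕ):ℝ) - ((γ.1:ℕ):ℝ)))
      simpa [hf, hv, mul_assoc] using this
    have husn : (0:ℝ) ≤ u ^ s := Real.rpow_nonneg hu0 s
    have hvsn : (0:ℝ) ≤ v ^ s := Real.rpow_nonneg hv0 s
    rw [hd]
    rcases min_cases u v with ⟨h, _⟩ | ⟨h, _⟩
    · rw [h]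
      have : (0:ℝ) ≤ 3 * (f α.1 γ.2 * f α.2 γ.1) := by positivity
      linarith
    · rw [h]
      have : (0:ℝ) ≤ 3 * (f α.1 γ.1 * f α.2 γ.2) := by positivity
      linarith
  calc ∑ α : Fin N × Fin N, 1 / (1 + dIdx α γ ^ s)
      ≤ ∑ α : Fin N × Fin N,
        (3 * (f α.1 γ.1 * f α.2 γ.2) + 3 * (f α.1 γ.2 * f α.2 γ.1)) :=
        Finset.sum_le_sum (fun α _ => hpt α)
    _ = (∑ a1 : Fin N, ∑ a2 : Fin N, 3 * (f a1 γ.1 * f a2 γ.2))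
        + (∑ a1 : Fin N, ∑ a2 : Fin N, 3 * (f a1 γ.2 * f a2 γ.1)) := by
        rw [Fintype.sum_prod_type]
        simp [Finset.sum_add_distrib]
    _ ≤ 3 * K^2 + 3 * K^2 := by
        have hgen : ∀ c d : Fin N,
            (∑ a1 : Fin N, ∑ a2 : Fin N, 3 * (f a1 c * f a2 d)) ≤ 3 * K^2 := by
          intro c d
          have h1 : ∀ a1 : Fin N, ∑ a2 : Fin N, 3 * (f a1 c * f a2 d)
              = 3 * f a1 c * ∑ a2, f a2 d := by
            intro a1
            rw [Finset.mul_sum]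
            exact Finset.sum_congr rfl (fun a2 _ => by ring)
          rw [Finset.sum_congr rfl (fun a1 _ => h1 a1)]
          calc ∑ a1 : Fin N, 3 * f a1 c * ∑ a2, f a2 d
              ≤ ∑ a1 : Fin N, 3 * f a1 c * K := by
                apply Finset.sum_le_sum
                intro a1 _
                exact mul_le_mul_of_nonneg_left (hfK d) (by positivity)
            _ = 3 * K * ∑ a1, f a1 c := by rw [Finset.mul_sum]; exact Finset.sum_congr rfl (fun a1 _ => by ring)
            _ ≤ 3 * K * K := mul_le_mul_of_nonneg_left (hfK c) (by positivity)
            _ = 3 * K^2 := by ring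
        exact add_le_add (hgen γ.1 γ.2) (hgen γ.2 γ.1)
    _ = 6 * K^2 := by ring

theorem three_cumulant_four_sums (s Cκ C₃ : ℝ) (hs : 2 < s) (hCκ : 0 < Cκ) (hC₃ : 0 < C₃) :
    ∃ C : ℝ, 0 < C ∧ ∀ (N : ℕ)
      (κ₂ : Fin N × Fin N → Fin N × Fin N → ℝ)
      (κ₃ : Fin N × Fin N → Fin N × Fin N → Fin N × Fin N → ℝ),
      (∀ α β, |κ₂ α β| ≤ Cκ / (1 + dIdx α β ^ s)) →
      (∀ α β γ, |κ₃ α β γ| ≤ C₃ * (|κ₂ α β * κ₂ β γ| + |κ₂ α β * κ₂ α γ| +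
          |κ₂ α γ * κ₂ β γ|)) →
      ∀ a5 a6 : Fin N,
        ∑ a1 : Fin N, ∑ a2 : Fin N, ∑ a3 : Fin N, ∑ a4 : Fin N,
          |κ₃ (a1, a2) (a3, a4) (a5, a6)| ≤ C := by
  obtain ⟨S, hS0, hSb⟩ := twoD_bound hs
  refine ⟨3 * C₃ * (Cκ * S)^2, by positivity, ?_⟩
  intro N κ₂ κ₃ hκ₂ hκ₃ a5 a6
  set γ : Fin N × Fin N := (a5, a6) with hγ
  set G : Fin N × Fin N → Fin N × Fin N → ℝ := fun α β => Cκ / (1 + dIdx α β ^ s) with hG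
  have hdnn : ∀ α β : Fin N × Fin N, (0:ℝ) ≤ dIdx α β ^ s :=
    fun α β => Real.rpow_nonneg (dIdx_nonneg α β) s
  have hGnn : ∀ α β, 0 ≤ G α β := by
    intro α β; have := hdnn α β; positivity
  have hGsum : ∀ δ : Fin N × Fin N, ∑ α : Fin N × Fin N, G α δ ≤ Cκ * S := by
    intro δ
    have : ∑ α : Fin N × Fin N, G α δ = Cκ * ∑ α : Fin N × Fin N, 1 / (1 + dIdx α δ ^ s) := by
      rw [Finset.mul_sum]
      exact Finset.sum_congr rfl (fun α _ => by rw [hG]; ring)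
    rw [this]
    exact mul_le_mul_of_nonneg_left (hSb N δ) hCκ.le
  have hGsum' : ∀ δ : Fin N × Fin N, ∑ β : Fin N × Fin N, G δ β ≤ Cκ * S := by
    intro δ
    have : ∀ β, G δ β = G β δ := fun β => by rw [hG]; simp only; rw [dIdx_symm]
    rw [Finset.sum_congr rfl (fun β _ => this β)]
    exact hGsum δ
  have hpt : ∀ α β : Fin N × Fin N, |κ₃ α β γ| ≤
      C₃ * (G α β * G β γ + G α β * G α γ + G α γ * G β γ) := by
    intro α β
    refine (hκ₃ α β γ).trans ?_
    have e1 : |κ₂ α β * κ₂ β γ| ≤ G α β * G β γ := by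
      rw [abs_mul]
      exact mul_le_mul (hκ₂ α β) (hκ₂ β γ) (abs_nonneg _) (hGnn α β)
    have e2 : |κ₂ α β * κ₂ α γ| ≤ G α β * G α γ := by
      rw [abs_mul]
      exact mul_le_mul (hκ₂ α β) (hκ₂ α γ) (abs_nonneg _) (hGnn α β)
    have e3 : |κ₂ α γ * κ₂ β γ| ≤ G α γ * G β γ := by
      rw [abs_mul]
      exact mul_le_mul (hκ₂ α γ) (hκ₂ β γ) (abs_nonneg _) (hGnn α γ)
    exact mul_le_mul_of_nonneg_left (by linarith) hC₃.le
  have hT1 : ∑ α : Fin N × Fin N, ∑ β : Fin N × Fin N, G α β * G β γ ≤ (Cκ * S)^2 := by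
    rw [Finset.sum_comm]
    calc ∑ β : Fin N × Fin N, ∑ α : Fin N × Fin N, G α β * G β γ
        = ∑ β : Fin N × Fin N, (∑ α : Fin N × Fin N, G α β) * G β γ := by
          exact Finset.sum_congr rfl (fun β _ => (Finset.sum_mul _ _ _).symm)
      _ ≤ ∑ β : Fin N × Fin N, (Cκ * S) * G β γ := by
          apply Finset.sum_le_sum
          intro β _
          exact mul_le_mul_of_nonneg_right (hGsum β) (hGnn β γ)
      _ = (Cκ * S) * ∑ β : Fin N × Fin N, G β γ := (Finset.mul_sum _ _ _).symm
      _ ≤ (Cκ * S) * (Cκ * S) := mul_le_mul_of_nonneg_left (hGsum γ) (by positivity)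
      _ = (Cκ * S)^2 := by ring
  have hT2 : ∑ α : Fin N × Fin N, ∑ β : Fin N × Fin N, G α β * G α γ ≤ (Cκ * S)^2 := by
    calc ∑ α : Fin N × Fin N, ∑ β : Fin N × Fin N, G α β * G α γ
        = ∑ α : Fin N × Fin N, (∑ β : Fin N × Fin N, G α β) * G α γ := by
          exact Finset.sum_congr rfl (fun α _ => (Finset.sum_mul _ _ _).symm)
      _ ≤ ∑ α : Fin N × Fin N, (Cκ * S) * G α γ := by
          apply Finset.sum_le_sum
          intro α _
          exact mul_le_mul_of_nonneg_right (hGsum' α) (hGnn α γ)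
      _ = (Cκ * S) * ∑ α : Fin N × Fin N, G α γ := (Finset.mul_sum _ _ _).symm
      _ ≤ (Cκ * S) * (Cκ * S) := mul_le_mul_of_nonneg_left (hGsum γ) (by positivity)
      _ = (Cκ * S)^2 := by ring
  have hT3 : ∑ α : Fin N × Fin N, ∑ β : Fin N × Fin N, G α γ * G β γ ≤ (Cκ * S)^2 := by
    calc ∑ α : Fin N × Fin N, ∑ β : Fin N × Fin N, G α γ * G β γ
        = (∑ α : Fin N × Fin N, G α γ) * ∑ β : Fin N × Fin N, G β γ :=
          (Finset.sum_mul_sum _ _ _ _).symm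
      _ ≤ (Cκ * S) * (Cκ * S) := by
          apply mul_le_mul (hGsum γ) (hGsum γ) (Finset.sum_nonneg (fun β _ => hGnn β γ)) (by positivity)
      _ = (Cκ * S)^2 := by ring
  calc ∑ a1 : Fin N, ∑ a2 : Fin N, ∑ a3 : Fin N, ∑ a4 : Fin N,
        |κ₃ (a1, a2) (a3, a4) (a5, a6)|
      = ∑ α : Fin N × Fin N, ∑ β : Fin N × Fin N, |κ₃ α β γ| := by
        simp only [Fintype.sum_prod_type, hγ]
    _ ≤ ∑ α : Fin N × Fin N, ∑ β : Fin N × Fin N,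
        C₃ * (G α β * G β γ + G α β * G α γ + G α γ * G β γ) :=
        Finset.sum_le_sum (fun α _ => Finset.sum_le_sum (fun β _ => hpt α β))
    _ = C₃ * ((∑ α : Fin N × Fin N, ∑ β : Fin N × Fin N, G α β * G β γ)
        + (∑ α : Fin N × Fin N, ∑ β : Fin N × Fin N, G α β * G α γ)
        + (∑ α : Fin N × Fin N, ∑ β : Fin N × Fin N, G α γ * G β γ)) := by
        simp only [mul_add, Finset.sum_add_distrib, Finset.mul_sum]
    _ ≤ C₃ * (3 * (Cκ * S)^2) := by
        apply mul_le_mul_of_nonneg_left _ hC₃.le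
        linarith
    _ = 3 * C₃ * (Cκ * S)^2 := by ring
end

section
/- Let j ≥ 2, let κ₂ satisfy |κ₂(α,β)| ≤ C_κ/(1+d(α,β)^s) with s > 2, and let κ_j satisfy |κ_j(α₁,...,α_j)| ≤ C(j)·∏_{e∈T} |κ₂(e)| for some spanning tree T on the complete graph with vertices α₁,...,α_j. Then there is a constant C' depending on j, s, C_κ, C(j) such that ∑_{a1,...,a_{2j}=1}^N |κ_j((a1,a2),...,(a_{2j-1},a_{2j}))| ≤ C'·N². -/
open Finset MeasureTheory

/-!
With `w(a, b) = C_κ / (1 + d(a, b)^s)`, the whole estimate reduces to a uniform bound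
`∑_a w(a, b) ≤ S` on the column sums. Since `d` is the minimum of two ℓ¹-distances and
`(1 + (u + v)^s)⁻¹ ≤ 2 (1 + u^(s/2))⁻¹ (1 + v^(s/2))⁻¹`, a column sum is at most a sum of two
products of one-dimensional sums `∑_a (1 + |a - b|^(s/2))⁻¹ ≤ ∑_{n ∈ ℤ} (1 + |n|^(s/2))⁻¹`,
which converge because `s/2 > 1`.

A tree product `∏_{i ≠ r} w(α_i, α_{p i})` summed over all labellings `α` is then bounded by
removing leaves one at a time: each leaf costs a factor `S`, and the root, which is left free,
costs `N²`. Since `|κ_j|` is dominated by the sum of the tree products over all the finitely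
many parent maps, the bound `C' N²` follows.
-/

noncomputable def decayWeight (t x : ℝ) : ℝ := (1 + |x| ^ t)⁻¹

lemma decayWeight_nonneg (t x : ℝ) : 0 ≤ decayWeight t x :=
  inv_nonneg.mpr (by positivity)

lemma summable_decayWeight_int {t : ℝ} (ht : 1 < t) :
    Summable fun n : ℤ => decayWeight t n := by
  refine (Real.summable_abs_int_rpow ht).of_norm_bounded_eventually ?_
  filter_upwards [Set.Finite.compl_mem_cofinite (Set.finite_singleton (0 : ℤ))] with n hn
  have hn : 0 < |(n : ℝ)| := by simpa using hn
  rw [Real.norm_of_nonneg (decayWeight_nonneg t n), decayWeight, Real.rpow_neg hn.le]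
  exact inv_anti₀ (by positivity) (by linarith)

lemma sum_fin_decayWeight_sub_le_tsum {t : ℝ} (ht : 1 < t) (N m : ℕ) :
    ∑ a : Fin N, decayWeight t (((a : ℕ) : ℝ) - m) ≤ ∑' n : ℤ, decayWeight t n := by
  have hinj : Function.Injective fun a : Fin N => ((a : ℕ) : ℤ) - m := fun a b hab => by
    simpa [Fin.val_inj] using hab
  rw [← tsum_fintype (L := .unconditional _)]
  convert tsum_comp_le_tsum_of_inj (summable_decayWeight_int ht)
    (fun n => decayWeight_nonneg t n) hinj using 3
  simp

lemma one_add_rpow_mul_one_add_rpow_le {u v t : ℝ} (hu : 0 ≤ u) (hv : 0 ≤ v) (ht : 0 ≤ t) :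
    (1 + u ^ t) * (1 + v ^ t) ≤ 2 * (1 + (u + v) ^ (2 * t)) := by
  have hu' : u ^ t ≤ (u + v) ^ t := Real.rpow_le_rpow hu (by linarith) ht
  have hv' : v ^ t ≤ (u + v) ^ t := Real.rpow_le_rpow hv (by linarith) ht
  have hsq : (u + v) ^ (2 * t) = ((u + v) ^ t) ^ 2 := by
    rw [mul_comm, Real.rpow_mul (by linarith)]
    norm_cast
  rw [hsq]
  nlinarith [Real.rpow_nonneg hu t, Real.rpow_nonneg hv t, sq_nonneg (1 - (u + v) ^ t)]

lemma decayWeight_abs_add_abs_le {t : ℝ} (ht : 0 ≤ t) (x y : ℝ) :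
    decayWeight (2 * t) (|x| + |y|) ≤ 2 * (decayWeight t x * decayWeight t y) := by
  rw [decayWeight, decayWeight, decayWeight, ← mul_inv, abs_of_nonneg (by positivity),
    ← inv_inv (2 : ℝ), ← mul_inv]
  refine inv_anti₀ (by positivity) ?_
  have := one_add_rpow_mul_one_add_rpow_le (abs_nonneg x) (abs_nonneg y) ht
  linarith

lemma decayWeight_min_le (t x y : ℝ) :
    decayWeight t (min x y) ≤ decayWeight t x + decayWeight t y := by
  rcases min_choice x y with h | h <;> rw [h]
  · linarith [decayWeight_nonneg t y]
  · linarith [decayWeight_nonneg t x]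

lemma decayWeight_dIdx_le {t : ℝ} (ht : 0 ≤ t) {N : ℕ} (a b : Fin N × Fin N) :
    decayWeight (2 * t) (dIdx a b) ≤
      2 * (decayWeight t (((a.1 : ℕ) : ℝ) - (b.1 : ℕ)) *
          decayWeight t (((a.2 : ℕ) : ℝ) - (b.2 : ℕ))) +
        2 * (decayWeight t (((a.1 : ℕ) : ℝ) - (b.2 : ℕ)) *
          decayWeight t (((a.2 : ℕ) : ℝ) - (b.1 : ℕ))) :=
  (decayWeight_min_le _ _ _).trans
    (add_le_add (decayWeight_abs_add_abs_le ht _ _) (decayWeight_abs_add_abs_le ht _ _))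

lemma exists_sum_div_one_add_dIdx_rpow_le {s C : ℝ} (hs : 2 < s) (hC : 0 ≤ C) :
    ∃ S, ∀ (N : ℕ) (b : Fin N × Fin N), ∑ a, C / (1 + dIdx a b ^ s) ≤ S := by
  set t := s / 2
  have ht : 1 < t := by simp only [t]; linarith
  set T := ∑' n : ℤ, decayWeight t n
  have hT : 0 ≤ T := tsum_nonneg fun n => decayWeight_nonneg t n
  refine ⟨C * (4 * T ^ 2), fun N b => ?_⟩
  have hrow : ∀ m : ℕ, ∑ a : Fin N, decayWeight t (((a : ℕ) : ℝ) - m) ≤ T :=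
    sum_fin_decayWeight_sub_le_tsum ht N
  have hrow0 : ∀ m : ℕ, 0 ≤ ∑ a : Fin N, decayWeight t (((a : ℕ) : ℝ) - m) :=
    fun m => sum_nonneg fun a _ => decayWeight_nonneg t _
  have hprod : ∀ m m' : ℕ, ∑ a : Fin N × Fin N,
      decayWeight t (((a.1 : ℕ) : ℝ) - m) * decayWeight t (((a.2 : ℕ) : ℝ) - m') ≤ T ^ 2 := by
    intro m m'
    rw [Fintype.sum_prod_type]
    dsimp only
    rw [← Fintype.sum_mul_sum, sq]
    exact mul_le_mul (hrow m) (hrow m') (hrow0 m') hT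
  have hs2 : s = 2 * t := by simp only [t]; ring
  calc ∑ a, C / (1 + dIdx a b ^ s)
      = C * ∑ a, decayWeight (2 * t) (dIdx a b) := by
        rw [mul_sum, ← hs2]
        refine sum_congr rfl fun a _ => ?_
        rw [decayWeight, abs_of_nonneg (dIdx_nonneg a b), div_eq_mul_inv]
    _ ≤ C * (2 * T ^ 2 + 2 * T ^ 2) := by
        gcongr
        refine (sum_le_sum fun a _ => decayWeight_dIdx_le (by linarith) a b).trans ?_
        rw [sum_add_distrib, ← mul_sum, ← mul_sum]
        gcongr <;> exact hprod _ _
    _ = C * (4 * T ^ 2) := by ring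

section RootedTree

variable {ι X : Type*}

lemma exists_depth_lt {p : ι → ι} {r : ι} (hreach : ∀ i, ∃ n, p^[n] i = r) :
    ∃ d : ι → ℕ, ∀ i, i ≠ r → d (p i) < d i := by
  classical
  refine ⟨fun i => Nat.find (hreach i), fun i hir => ?_⟩
  have hspec : p^[Nat.find (hreach i)] i = r := Nat.find_spec (hreach i)
  obtain ⟨n, hn⟩ : ∃ n, Nat.find (hreach i) = n + 1 :=
    Nat.exists_eq_succ_of_ne_zero fun h0 => hir (by rwa [h0] at hspec)
  rw [hn, Function.iterate_succ_apply] at hspec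
  show Nat.find _ < Nat.find _
  rw [hn]
  exact Nat.lt_succ_of_le (Nat.find_le hspec)

lemma exists_leaf_of_depth_lt {p : ι → ι} (d : ι → ℕ) {E : Finset ι} (hE : E.Nonempty)
    (hd : ∀ i ∈ E, d (p i) < d i) : ∃ i₀ ∈ E, p i₀ ≠ i₀ ∧ ∀ i ∈ E, p i ≠ i₀ := by
  obtain ⟨i₀, hi₀, hmax⟩ := E.exists_max_image d hE
  exact ⟨i₀, hi₀, fun h => (hd i₀ hi₀).ne (congrArg d h),
    fun i hi h => (hmax i hi).not_gt (h ▸ hd i hi)⟩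

lemma card_smul_sum_eq_sum_sum_update [Fintype ι] [DecidableEq ι] [Fintype X] {M : Type*}
    [AddCommMonoid M] (i₀ : ι) (F : (ι → X) → M) :
    Fintype.card X • ∑ α, F α = ∑ α, ∑ x, F (Function.update α i₀ x) := by
  have hφ : Function.Bijective fun y : (ι → X) × X => (Function.update y.1 i₀ y.2, y.1 i₀) :=
    Function.Involutive.bijective fun y => by ext1 <;> simp
  calc Fintype.card X • ∑ α, F α = ∑ y : (ι → X) × X, F y.1 := by
        simp [Fintype.sum_prod_type, smul_sum]
    _ = ∑ y : (ι → X) × X, F (Function.update y.1 i₀ y.2) :=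
        (Fintype.sum_bijective _ hφ _ _ fun y => rfl).symm
    _ = ∑ α, ∑ x, F (Function.update α i₀ x) := Fintype.sum_prod_type _

lemma card_pow_mul_sum_prod_le [Fintype ι] [DecidableEq ι] [Fintype X] {w : X → X → ℝ}
    (hw : ∀ a b, 0 ≤ w a b) {S : ℝ} (hS0 : 0 ≤ S) (hS : ∀ b, ∑ a, w a b ≤ S)
    {p : ι → ι} (d : ι → ℕ) (E : Finset ι) (hd : ∀ i ∈ E, d (p i) < d i) :
    (Fintype.card X : ℝ) ^ #E * ∑ α : ι → X, ∏ i ∈ E, w (α i) (α (p i)) ≤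
      S ^ #E * (Fintype.card X : ℝ) ^ Fintype.card ι := by
  induction E using Finset.strongInduction with
  | H E ih =>
  rcases E.eq_empty_or_nonempty with rfl | hE
  · simp
  obtain ⟨i₀, hi₀, hpi₀, hleaf⟩ := exists_leaf_of_depth_lt d hE hd
  set E' := E.erase i₀
  have hcard : #E = #E' + 1 := (card_erase_add_one hi₀).symm
  have hupdate : ∀ (α : ι → X) (x : X), ∏ i ∈ E, w (Function.update α i₀ x i)
      (Function.update α i₀ x (p i)) = w x (α (p i₀)) * ∏ i ∈ E', w (α i) (α (p i)) := by
    intro α x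
    rw [← mul_prod_erase E _ hi₀, Function.update_self, Function.update_of_ne hpi₀]
    congr 1
    refine prod_congr rfl fun i hi => ?_
    rw [Function.update_of_ne (ne_of_mem_erase hi),
      Function.update_of_ne (hleaf i (mem_of_mem_erase hi))]
  have hstep : (Fintype.card X : ℝ) * ∑ α : ι → X, ∏ i ∈ E, w (α i) (α (p i)) ≤
      S * ∑ α : ι → X, ∏ i ∈ E', w (α i) (α (p i)) := by
    rw [← nsmul_eq_mul, card_smul_sum_eq_sum_sum_update i₀, mul_sum]
    refine sum_le_sum fun α _ => ?_
    simp_rw [hupdate, ← sum_mul]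
    exact mul_le_mul_of_nonneg_right (hS _) (prod_nonneg fun i _ => hw _ _)
  have ih' := ih E' (erase_ssubset hi₀) fun i hi => hd i (mem_of_mem_erase hi)
  calc (Fintype.card X : ℝ) ^ #E * ∑ α : ι → X, ∏ i ∈ E, w (α i) (α (p i))
      = (Fintype.card X : ℝ) ^ #E' *
          ((Fintype.card X : ℝ) * ∑ α : ι → X, ∏ i ∈ E, w (α i) (α (p i))) := by
        rw [hcard, pow_succ, mul_assoc]
    _ ≤ (Fintype.card X : ℝ) ^ #E' * (S * ∑ α : ι → X, ∏ i ∈ E', w (α i) (α (p i))) := by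
        gcongr
    _ = S * ((Fintype.card X : ℝ) ^ #E' * ∑ α : ι → X, ∏ i ∈ E', w (α i) (α (p i))) := by ring
    _ ≤ S * (S ^ #E' * (Fintype.card X : ℝ) ^ Fintype.card ι) := by gcongr
    _ = S ^ #E * (Fintype.card X : ℝ) ^ Fintype.card ι := by rw [hcard, pow_succ]; ring

lemma sum_prod_rooted_tree_le [Fintype ι] [DecidableEq ι] [Fintype X] {w : X → X → ℝ}
    (hw : ∀ a b, 0 ≤ w a b) {S : ℝ} (hS0 : 0 ≤ S) (hS : ∀ b, ∑ a, w a b ≤ S)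
    {p : ι → ι} {r : ι} (hreach : ∀ i, ∃ n, p^[n] i = r) :
    ∑ α : ι → X, ∏ i ∈ univ.erase r, w (α i) (α (p i)) ≤
      S ^ (Fintype.card ι - 1) * Fintype.card X := by
  obtain ⟨d, hd⟩ := exists_depth_lt hreach
  have key := card_pow_mul_sum_prod_le hw hS0 hS d (univ.erase r)
    fun i hi => hd i (ne_of_mem_erase hi)
  have hcard : Fintype.card ι = #(univ.erase r) + 1 := by
    rw [card_erase_of_mem (mem_univ r), card_univ]
    have := Fintype.card_pos_iff.mpr ⟨r⟩
    omega
  rw [hcard, Nat.add_sub_cancel]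
  rcases (Fintype.card X).eq_zero_or_pos with hX | hX
  · have : IsEmpty X := Fintype.card_eq_zero_iff.mp hX
    have : IsEmpty (ι → X) := ⟨fun α => isEmptyElim (α r)⟩
    simp only [univ_eq_empty, sum_empty]
    positivity
  rw [hcard, pow_succ,
    show ∀ a b c : ℝ, a * (b * c) = b * (a * c) from fun a b c => by ring] at key
  exact le_of_mul_le_mul_left key (by positivity)

lemma sum_le_of_forall_exists_rooted_tree [Fintype ι] [DecidableEq ι] [Fintype X]
    {w : X → X → ℝ} (hw : ∀ a b, 0 ≤ w a b) {S : ℝ} (hS0 : 0 ≤ S) (hS : ∀ b, ∑ a, w a b ≤ S)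
    {C : ℝ} (hC : 0 ≤ C) (F : (ι → X) → ℝ)
    (hF : ∀ α, ∃ (p : ι → ι) (r : ι), (∀ i, ∃ n, p^[n] i = r) ∧
      F α ≤ C * ∏ i ∈ univ.erase r, w (α i) (α (p i))) :
    ∑ α, F α ≤
      Fintype.card ((ι → ι) × ι) * C * S ^ (Fintype.card ι - 1) * Fintype.card X := by
  classical
  let trees := univ.filter fun pr : (ι → ι) × ι => ∀ i, ∃ n, pr.1^[n] i = pr.2
  let G (pr : (ι → ι) × ι) (α : ι → X) : ℝ := C * ∏ i ∈ univ.erase pr.2, w (α i) (α (pr.1 i))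
  have hFG : ∀ α, F α ≤ ∑ pr ∈ trees, G pr α := fun α => by
    obtain ⟨p, r, hreach, hle⟩ := hF α
    have hmem : (p, r) ∈ trees := mem_filter.mpr ⟨mem_univ _, hreach⟩
    exact hle.trans (single_le_sum (f := fun pr => G pr α)
      (fun pr _ => mul_nonneg hC (prod_nonneg fun i _ => hw _ _)) hmem)
  calc ∑ α, F α ≤ ∑ α, ∑ pr ∈ trees, G pr α := sum_le_sum fun α _ => hFG α
    _ = ∑ pr ∈ trees, C * ∑ α : ι → X, ∏ i ∈ univ.erase pr.2, w (α i) (α (pr.1 i)) := by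
        rw [sum_comm]
        simp only [G, mul_sum]
    _ ≤ ∑ _pr ∈ trees, C * (S ^ (Fintype.card ι - 1) * Fintype.card X) := by
        refine sum_le_sum fun pr hpr => ?_
        gcongr
        exact sum_prod_rooted_tree_le hw hS0 hS (mem_filter.mp hpr).2
    _ = #trees * (C * (S ^ (Fintype.card ι - 1) * Fintype.card X)) := by
        rw [sum_const, nsmul_eq_mul]
    _ ≤ Fintype.card ((ι → ι) × ι) * (C * (S ^ (Fintype.card ι - 1) * Fintype.card X)) := by
        gcongr
        exact card_le_univ trees
    _ = Fintype.card ((ι → ι) × ι) * C * S ^ (Fintype.card ι - 1) * Fintype.card X := by ring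

end RootedTree

/-- A rooted spanning tree on `Fin j` is encoded by a parent map `p` with root `r`; its edges
are the pairs `(i, p i)` for `i ≠ r`. -/
theorem higher_cumulant_sum_bound (j : ℕ) (hj : 2 ≤ j) (s Cκ Cj : ℝ)
    (hs : 2 < s) (hCκ : 0 < Cκ) (hCj : 0 < Cj) :
    ∃ C' : ℝ, 0 < C' ∧ ∀ (N : ℕ) (κj : (Fin j → Fin N × Fin N) → ℝ),
      (∀ α : Fin j → Fin N × Fin N, ∃ (p : Fin j → Fin j) (r : Fin j),
        p r = r ∧ (∀ i : Fin j, ∃ n : ℕ, p^[n] i = r) ∧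
        |κj α| ≤ Cj * ∏ i ∈ Finset.univ.erase r, Cκ / (1 + dIdx (α i) (α (p i)) ^ s)) →
      ∑ α : Fin j → Fin N × Fin N, |κj α| ≤ C' * (N : ℝ) ^ 2 := by
  obtain ⟨S, hS⟩ := exists_sum_div_one_add_dIdx_rpow_le hs hCκ.le
  have : NeZero j := ⟨by omega⟩
  refine ⟨Fintype.card ((Fin j → Fin j) × Fin j) * Cj * max S 1 ^ (j - 1), by positivity,
    fun N κj hκ => ?_⟩
  have hw : ∀ a b : Fin N × Fin N, 0 ≤ Cκ / (1 + dIdx a b ^ s) := fun a b =>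
    div_nonneg hCκ.le (by have := Real.rpow_nonneg (dIdx_nonneg a b) s; positivity)
  have hmain := sum_le_of_forall_exists_rooted_tree hw (zero_le_one.trans (le_max_right S 1))
    (fun b => (hS N b).trans (le_max_left S 1)) hCj.le (fun α => |κj α|)
    fun α => by
      obtain ⟨p, r, -, hreach, hle⟩ := hκ α
      exact ⟨p, r, hreach, hle⟩
  simpa [sq] using hmain
end

section
/- Let κ satisfy |κ(α,β)| ≤ C_κ/(1+d(α,β)^s) with s > 2 and let x ∈ ℝ^N. Then there is a constant C such that ∑_{a2,a3,a4=1}^N |∑_{a1=1}^N κ((a1,a2),(a3,a4)) x_{a1}| ≤ C·N^{3/2}·‖x‖₂, uniformly in N. -/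
open Finset MeasureTheory

lemma abs_natCast_sub (a b : ℕ) : |(a:ℝ) - (b:ℝ)| = (Nat.dist a b : ℝ) := by
  rcases le_total a b with h | h
  · rw [abs_sub_comm, abs_of_nonneg (sub_nonneg.mpr (by exact_mod_cast h)),
      Nat.dist_eq_sub_of_le h]
    push_cast [h]
    ring
  · rw [abs_of_nonneg (sub_nonneg.mpr (by exact_mod_cast h)), Nat.dist_comm,
      Nat.dist_eq_sub_of_le h]
    push_cast [h]
    ring

lemma summable_aux (p : ℝ) (hp : 1 < p) :
    Summable (fun j : ℕ => ((j:ℝ) + 1) ^ (-p)) := by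
  have h0 : Summable (fun n : ℕ => (n:ℝ) ^ (-p)) :=
    Real.summable_nat_rpow.mpr (by linarith)
  have h := (summable_nat_add_iff 1).mpr h0
  refine h.congr fun n => ?_
  push_cast
  ring_nf

lemma core_rpow (s : ℝ) (hs : 2 < s) (m k : ℕ) :
    1 / (1 + ((m:ℝ) + (k:ℝ)) ^ s) ≤
      2 ^ s * (((m:ℝ) + 1) ^ (-(s/2)) * (((k:ℝ) + 1) ^ (-(s/2)))) := by
  have hs0 : (0:ℝ) < s := by linarith
  have hm : (0:ℝ) ≤ (m:ℝ) := Nat.cast_nonneg m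
  have hk : (0:ℝ) ≤ (k:ℝ) := Nat.cast_nonneg k
  set w : ℝ := (m:ℝ) + (k:ℝ) with hw
  have hw0 : (0:ℝ) ≤ w := by positivity
  have h1 : (0:ℝ) < 1 + w ^ s := by positivity
  set z : ℝ := ((m:ℝ) + 1) * ((k:ℝ) + 1) with hz
  have hz0 : (0:ℝ) < z := by positivity
  have hzp : (0:ℝ) < z ^ (s/2) := Real.rpow_pos_of_pos hz0 _
  have hrw : ((m:ℝ) + 1) ^ (-(s/2)) * (((k:ℝ) + 1) ^ (-(s/2))) = (z ^ (s/2))⁻¹ := by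
    rw [hz, Real.mul_rpow (by positivity) (by positivity), mul_inv,
      ← Real.rpow_neg (by positivity), ← Real.rpow_neg (by positivity)]
  rw [hrw, ← div_eq_mul_inv, div_le_div_iff₀ h1 hzp, one_mul]
  -- reduce to z^(s/2) ≤ 2^s * (1 + w^s)
  have key : z ^ (s/2) ≤ 2 ^ s * (1 + w ^ s) := by
    have step1 : z ≤ (1 + w) ^ 2 := by
      rw [hz, hw]; nlinarith
    have step2 : z ^ (s/2) ≤ ((1 + w) ^ 2) ^ (s/2) :=
      Real.rpow_le_rpow (le_of_lt hz0) step1 (by positivity)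
    have step3 : ((1 + w) ^ 2) ^ (s/2) = (1 + w) ^ s := by
      rw [← Real.rpow_natCast (1 + w) 2, ← Real.rpow_mul (by positivity)]
      congr 1
      push_cast
      ring
    have step4 : (1 + w) ^ s ≤ (2 * max 1 w) ^ s := by
      apply Real.rpow_le_rpow (by positivity) _ (le_of_lt hs0)
      rcases le_total w 1 with h | h
      · rw [max_eq_left h]; linarith
      · rw [max_eq_right h]; linarith
    have step5 : (2 * max 1 w) ^ s = 2 ^ s * (max 1 w) ^ s := by
      rw [Real.mul_rpow (by norm_num) (by positivity)]
    have step6 : (max 1 w) ^ s ≤ 1 + w ^ s := by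
      rcases le_total w 1 with h | h
      · rw [max_eq_left h, Real.one_rpow]
        have : (0:ℝ) ≤ w ^ s := Real.rpow_nonneg hw0 _
        linarith
      · rw [max_eq_right h]
        linarith
    calc z ^ (s/2) ≤ (1 + w) ^ s := by rw [← step3]; exact step2
      _ ≤ 2 ^ s * (max 1 w) ^ s := by rw [← step5]; exact step4
      _ ≤ 2 ^ s * (1 + w ^ s) := by
          have h2 : (0:ℝ) < (2:ℝ) ^ s := Real.rpow_pos_of_pos (by norm_num) _
          nlinarith
  linarith

lemma row_sum_le (p : ℝ) (hp : 1 < p) {N : ℕ} (a : Fin N) :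
    ∑ b : Fin N, ((Nat.dist a.val b.val : ℝ) + 1) ^ (-p)
      ≤ 2 * ∑' j : ℕ, ((j:ℝ) + 1) ^ (-p) := by
  classical
  set g : ℕ → ℝ := fun j => ((j:ℝ) + 1) ^ (-p) with hg
  have hgpos : ∀ j, 0 ≤ g j := fun j => Real.rpow_nonneg (by positivity) _
  have hsum : Summable g := summable_aux p hp
  have key : ∀ (S : Finset (Fin N)) (f : Fin N → ℕ), Set.InjOn f S →
      ∑ b ∈ S, g (f b) ≤ ∑' j, g j := by
    intro S f hinj
    calc ∑ b ∈ S, g (f b) = ∑ j ∈ S.image f, g j :=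
          (Finset.sum_image (fun x hx y hy h => hinj hx hy h)).symm
      _ ≤ ∑' j, g j := Summable.sum_le_tsum _ (fun j _ => hgpos j) hsum
  have hsplit := Finset.sum_filter_add_sum_filter_not (univ : Finset (Fin N))
      (fun b => a.val ≤ b.val) (fun b => g (Nat.dist a.val b.val))
  rw [← hsplit]
  have h1 : ∑ b ∈ univ.filter (fun b : Fin N => a.val ≤ b.val), g (Nat.dist a.val b.val)
      ≤ ∑' j, g j := by
    have e : ∀ b ∈ univ.filter (fun b : Fin N => a.val ≤ b.val),
        g (Nat.dist a.val b.val) = g (b.val - a.val) := by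
      intro b hb
      simp only [Finset.mem_filter] at hb
      congr 1
      simp [Nat.dist]
      omega
    rw [Finset.sum_congr rfl e]
    apply key
    intro x hx y hy hxy
    simp only [Finset.coe_filter, Set.mem_setOf_eq, Finset.mem_univ, true_and] at hx hy
    simp only [] at hxy
    exact Fin.ext (by omega)
  have h2 : ∑ b ∈ univ.filter (fun b : Fin N => ¬ a.val ≤ b.val), g (Nat.dist a.val b.val)
      ≤ ∑' j, g j := by
    have e : ∀ b ∈ univ.filter (fun b : Fin N => ¬ a.val ≤ b.val),
        g (Nat.dist a.val b.val) = g (a.val - b.val) := by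
      intro b hb
      simp only [Finset.mem_filter] at hb
      congr 1
      simp [Nat.dist]
      omega
    rw [Finset.sum_congr rfl e]
    apply key
    intro x hx y hy hxy
    simp only [Finset.coe_filter, Set.mem_setOf_eq, Finset.mem_univ, true_and] at hx hy
    simp only [] at hxy
    exact Fin.ext (by omega)
  linarith

lemma dIdx_bound (s : ℝ) (hs : 2 < s) {N : ℕ} (α β : Fin N × Fin N) :
    1 / (1 + dIdx α β ^ s) ≤
      2 ^ s * (((Nat.dist α.1.val β.1.val : ℝ) + 1) ^ (-(s/2)) *
               ((Nat.dist α.2.val β.2.val : ℝ) + 1) ^ (-(s/2)))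
    + 2 ^ s * (((Nat.dist α.1.val β.2.val : ℝ) + 1) ^ (-(s/2)) *
               ((Nat.dist α.2.val β.1.val : ℝ) + 1) ^ (-(s/2))) := by
  have h2s : (0:ℝ) < 2 ^ s := Real.rpow_pos_of_pos (by norm_num) s
  have nn1 : (0:ℝ) ≤ 2 ^ s * (((Nat.dist α.1.val β.1.val : ℝ) + 1) ^ (-(s/2)) *
               ((Nat.dist α.2.val β.2.val : ℝ) + 1) ^ (-(s/2))) := by positivity
  have nn2 : (0:ℝ) ≤ 2 ^ s * (((Nat.dist α.1.val β.2.val : ℝ) + 1) ^ (-(s/2)) *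
               ((Nat.dist α.2.val β.1.val : ℝ) + 1) ^ (-(s/2))) := by positivity
  unfold dIdx
  rw [abs_natCast_sub, abs_natCast_sub, abs_natCast_sub, abs_natCast_sub]
  rcases min_cases ((Nat.dist α.1.val β.1.val : ℝ) + (Nat.dist α.2.val β.2.val : ℝ))
      ((Nat.dist α.1.val β.2.val : ℝ) + (Nat.dist α.2.val β.1.val : ℝ)) with ⟨h, -⟩ | ⟨h, -⟩
  · rw [h]
    have := core_rpow s hs (Nat.dist α.1.val β.1.val) (Nat.dist α.2.val β.2.val)
    linarith
  · rw [h]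
    have := core_rpow s hs (Nat.dist α.1.val β.2.val) (Nat.dist α.2.val β.1.val)
    linarith

theorem cumulant_vector_three_sums (s Cκ : ℝ) (hs : 2 < s) (hCκ : 0 < Cκ) :
    ∃ C : ℝ, 0 < C ∧ ∀ (N : ℕ) (κ : Fin N × Fin N → Fin N × Fin N → ℝ),
      (∀ α β, |κ α β| ≤ Cκ / (1 + dIdx α β ^ s)) →
      ∀ x : Fin N → ℝ,
        ∑ a2 : Fin N, ∑ a3 : Fin N, ∑ a4 : Fin N,
          |∑ a1 : Fin N, κ (a1, a2) (a3, a4) * x a1|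
            ≤ C * (N : ℝ) ^ ((3 : ℝ) / 2) * eucNorm x := by
  have hp1 : 1 < s / 2 := by linarith
  set p : ℝ := s / 2 with hp
  set A : ℝ := ∑' j : ℕ, ((j:ℝ) + 1) ^ (-p) with hA
  have hsumg : Summable (fun j : ℕ => ((j:ℝ) + 1) ^ (-p)) := summable_aux p hp1
  have hA1 : 1 ≤ A := by
    have h0 := Summable.le_tsum hsumg 0 (fun i _ => Real.rpow_nonneg (by positivity) _)
    simpa using h0
  have hA0 : 0 < A := lt_of_lt_of_le one_pos hA1
  have h2s : (0:ℝ) < 2 ^ s := Real.rpow_pos_of_pos (by norm_num) s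
  refine ⟨Cκ * 2 ^ s * 8 * A ^ 2,
    mul_pos (mul_pos (mul_pos hCκ h2s) (by norm_num)) (pow_pos hA0 2), ?_⟩
  intro N κ hκ x
  rcases Nat.eq_zero_or_pos N with hN | hN
  · subst hN
    simp [Real.zero_rpow (by norm_num : (3:ℝ)/2 ≠ 0), eucNorm]
  -- main case
  set G : Fin N → Fin N → ℝ := fun a b => ((Nat.dist a.val b.val : ℝ) + 1) ^ (-p) with hG
  have hGnn : ∀ a b, 0 ≤ G a b := fun a b => Real.rpow_nonneg (by positivity) _
  have hrow : ∀ a : Fin N, ∑ b : Fin N, G a b ≤ 2 * A := fun a => row_sum_le p hp1 a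
  have hrownn : ∀ a : Fin N, 0 ≤ ∑ b : Fin N, G a b :=
    fun a => Finset.sum_nonneg fun b _ => hGnn a b
  have hAnn : (0:ℝ) ≤ 2 * A := by linarith
  -- pointwise bound on |κ|·|x|
  have hpoint : ∀ a1 a2 a3 a4 : Fin N,
      |κ (a1, a2) (a3, a4) * x a1| ≤
        Cκ * (2 ^ s * (G a1 a3 * G a2 a4) + 2 ^ s * (G a1 a4 * G a2 a3)) * |x a1| := by
    intro a1 a2 a3 a4
    rw [abs_mul]
    apply mul_le_mul_of_nonneg_right _ (abs_nonneg _)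
    calc |κ (a1, a2) (a3, a4)| ≤ Cκ / (1 + dIdx (a1, a2) (a3, a4) ^ s) := hκ _ _
      _ = Cκ * (1 / (1 + dIdx (a1, a2) (a3, a4) ^ s)) := by ring
      _ ≤ Cκ * (2 ^ s * (G a1 a3 * G a2 a4) + 2 ^ s * (G a1 a4 * G a2 a3)) := by
          apply mul_le_mul_of_nonneg_left _ (le_of_lt hCκ)
          exact dIdx_bound s hs (a1, a2) (a3, a4)
  -- triple sum bound for fixed a1
  have htriple : ∀ a1 : Fin N,
      ∑ a2 : Fin N, ∑ a3 : Fin N, ∑ a4 : Fin N,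
        (2 ^ s * (G a1 a3 * G a2 a4) + 2 ^ s * (G a1 a4 * G a2 a3))
        ≤ 2 ^ s * 8 * A ^ 2 * N := by
    intro a1
    have e : ∀ a2 : Fin N, ∑ a3 : Fin N, ∑ a4 : Fin N,
        (2 ^ s * (G a1 a3 * G a2 a4) + 2 ^ s * (G a1 a4 * G a2 a3))
        = 2 ^ s * ((∑ a3, G a1 a3) * (∑ a4, G a2 a4))
          + 2 ^ s * ((∑ a3, G a2 a3) * (∑ a4, G a1 a4)) := by
      intro a2
      rw [Finset.sum_mul_sum, Finset.sum_mul_sum, Finset.mul_sum, Finset.mul_sum,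
        ← Finset.sum_add_distrib]
      refine Finset.sum_congr rfl fun a3 _ => ?_
      rw [Finset.mul_sum, Finset.mul_sum, ← Finset.sum_add_distrib]
      refine Finset.sum_congr rfl fun a4 _ => ?_
      ring
    calc ∑ a2 : Fin N, ∑ a3 : Fin N, ∑ a4 : Fin N,
          (2 ^ s * (G a1 a3 * G a2 a4) + 2 ^ s * (G a1 a4 * G a2 a3))
        = ∑ a2 : Fin N, (2 ^ s * ((∑ a3, G a1 a3) * (∑ a4, G a2 a4))
            + 2 ^ s * ((∑ a3, G a2 a3) * (∑ a4, G a1 a4))) :=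
          Finset.sum_congr rfl fun a2 _ => e a2
      _ ≤ ∑ a2 : Fin N, (2 ^ s * ((2*A) * (2*A)) + 2 ^ s * ((2*A) * (2*A))) := by
          refine Finset.sum_le_sum fun a2 _ => ?_
          have b1 : (∑ a3, G a1 a3) * (∑ a4, G a2 a4) ≤ (2*A) * (2*A) :=
            mul_le_mul (hrow a1) (hrow a2) (hrownn a2) hAnn
          have b2 : (∑ a3, G a2 a3) * (∑ a4, G a1 a4) ≤ (2*A) * (2*A) :=
            mul_le_mul (hrow a2) (hrow a1) (hrownn a1) hAnn
          have := mul_le_mul_of_nonneg_left b1 (le_of_lt h2s)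
          have := mul_le_mul_of_nonneg_left b2 (le_of_lt h2s)
          linarith
      _ = 2 ^ s * 8 * A ^ 2 * N := by
          rw [Finset.sum_const, Finset.card_univ, Fintype.card_fin, nsmul_eq_mul]
          ring
  -- Cauchy-Schwarz
  have habs : (0:ℝ) ≤ ∑ i, |x i| := Finset.sum_nonneg fun i _ => abs_nonneg _
  have hCS : ∑ i, |x i| ≤ Real.sqrt N * eucNorm x := by
    have h := Finset.sum_mul_sq_le_sq_mul_sq Finset.univ (fun _ : Fin N => (1:ℝ))
      (fun i => |x i|)
    simp only [one_mul, one_pow, sq_abs, Finset.sum_const, Finset.card_univ,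
      Fintype.card_fin, nsmul_eq_mul, mul_one] at h
    calc ∑ i, |x i| = Real.sqrt ((∑ i, |x i|) ^ 2) := (Real.sqrt_sq habs).symm
      _ ≤ Real.sqrt ((N:ℝ) * ∑ i, x i ^ 2) := Real.sqrt_le_sqrt h
      _ = Real.sqrt N * eucNorm x := by
          rw [Real.sqrt_mul (Nat.cast_nonneg N), eucNorm]
  -- putting it together
  have hswap : ∑ a2 : Fin N, ∑ a3 : Fin N, ∑ a4 : Fin N, ∑ a1 : Fin N,
        (Cκ * (2 ^ s * (G a1 a3 * G a2 a4) + 2 ^ s * (G a1 a4 * G a2 a3)) * |x a1|)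
      = ∑ a1 : Fin N, ∑ a2 : Fin N, ∑ a3 : Fin N, ∑ a4 : Fin N,
        (Cκ * (2 ^ s * (G a1 a3 * G a2 a4) + 2 ^ s * (G a1 a4 * G a2 a3)) * |x a1|) := by
    calc ∑ a2 : Fin N, ∑ a3 : Fin N, ∑ a4 : Fin N, ∑ a1 : Fin N,
          (Cκ * (2 ^ s * (G a1 a3 * G a2 a4) + 2 ^ s * (G a1 a4 * G a2 a3)) * |x a1|)
        = ∑ a2 : Fin N, ∑ a3 : Fin N, ∑ a1 : Fin N, ∑ a4 : Fin N,
          (Cκ * (2 ^ s * (G a1 a3 * G a2 a4) + 2 ^ s * (G a1 a4 * G a2 a3)) * |x a1|) :=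
          Finset.sum_congr rfl fun a2 _ => Finset.sum_congr rfl fun a3 _ =>
            Finset.sum_comm
      _ = ∑ a2 : Fin N, ∑ a1 : Fin N, ∑ a3 : Fin N, ∑ a4 : Fin N,
          (Cκ * (2 ^ s * (G a1 a3 * G a2 a4) + 2 ^ s * (G a1 a4 * G a2 a3)) * |x a1|) :=
          Finset.sum_congr rfl fun a2 _ => Finset.sum_comm
      _ = ∑ a1 : Fin N, ∑ a2 : Fin N, ∑ a3 : Fin N, ∑ a4 : Fin N,
          (Cκ * (2 ^ s * (G a1 a3 * G a2 a4) + 2 ^ s * (G a1 a4 * G a2 a3)) * |x a1|) :=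
          Finset.sum_comm
  calc ∑ a2 : Fin N, ∑ a3 : Fin N, ∑ a4 : Fin N, |∑ a1 : Fin N, κ (a1, a2) (a3, a4) * x a1|
      ≤ ∑ a2 : Fin N, ∑ a3 : Fin N, ∑ a4 : Fin N, ∑ a1 : Fin N,
          (Cκ * (2 ^ s * (G a1 a3 * G a2 a4) + 2 ^ s * (G a1 a4 * G a2 a3)) * |x a1|) := by
        refine Finset.sum_le_sum fun a2 _ => Finset.sum_le_sum fun a3 _ =>
          Finset.sum_le_sum fun a4 _ => ?_
        calc |∑ a1 : Fin N, κ (a1, a2) (a3, a4) * x a1|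
            ≤ ∑ a1 : Fin N, |κ (a1, a2) (a3, a4) * x a1| :=
              Finset.abs_sum_le_sum_abs _ _
          _ ≤ ∑ a1 : Fin N, (Cκ * (2 ^ s * (G a1 a3 * G a2 a4)
                + 2 ^ s * (G a1 a4 * G a2 a3)) * |x a1|) :=
              Finset.sum_le_sum fun a1 _ => hpoint a1 a2 a3 a4
    _ = ∑ a1 : Fin N, ∑ a2 : Fin N, ∑ a3 : Fin N, ∑ a4 : Fin N,
          (Cκ * (2 ^ s * (G a1 a3 * G a2 a4) + 2 ^ s * (G a1 a4 * G a2 a3)) * |x a1|) := hswap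
    _ ≤ ∑ a1 : Fin N, (Cκ * (2 ^ s * 8 * A ^ 2 * N)) * |x a1| := by
        refine Finset.sum_le_sum fun a1 _ => ?_
        have e2 : ∑ a2 : Fin N, ∑ a3 : Fin N, ∑ a4 : Fin N,
            (Cκ * (2 ^ s * (G a1 a3 * G a2 a4) + 2 ^ s * (G a1 a4 * G a2 a3)) * |x a1|)
            = (∑ a2 : Fin N, ∑ a3 : Fin N, ∑ a4 : Fin N,
                (2 ^ s * (G a1 a3 * G a2 a4) + 2 ^ s * (G a1 a4 * G a2 a3))) * (Cκ * |x a1|) := by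
          rw [Finset.sum_mul]
          refine Finset.sum_congr rfl fun a2 _ => ?_
          rw [Finset.sum_mul]
          refine Finset.sum_congr rfl fun a3 _ => ?_
          rw [Finset.sum_mul]
          refine Finset.sum_congr rfl fun a4 _ => ?_
          ring
        rw [e2]
        have := mul_le_mul_of_nonneg_right (htriple a1)
          (mul_nonneg (le_of_lt hCκ) (abs_nonneg (x a1)))
        calc (∑ a2 : Fin N, ∑ a3 : Fin N, ∑ a4 : Fin N,
              (2 ^ s * (G a1 a3 * G a2 a4) + 2 ^ s * (G a1 a4 * G a2 a3))) * (Cκ * |x a1|)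
            ≤ (2 ^ s * 8 * A ^ 2 * N) * (Cκ * |x a1|) := this
          _ = (Cκ * (2 ^ s * 8 * A ^ 2 * N)) * |x a1| := by ring
    _ = (Cκ * (2 ^ s * 8 * A ^ 2 * N)) * ∑ a1 : Fin N, |x a1| := by
        rw [← Finset.mul_sum]
    _ ≤ (Cκ * (2 ^ s * 8 * A ^ 2 * N)) * (Real.sqrt N * eucNorm x) := by
        apply mul_le_mul_of_nonneg_left hCS
        positivity
    _ = Cκ * 2 ^ s * 8 * A ^ 2 * ((N:ℝ) * Real.sqrt N) * eucNorm x := by ring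
    _ = Cκ * 2 ^ s * 8 * A ^ 2 * (N : ℝ) ^ ((3:ℝ)/2) * eucNorm x := by
        congr 2
        rw [show (3:ℝ)/2 = 1 + 1/2 by norm_num,
          Real.rpow_add (by exact_mod_cast hN : (0:ℝ) < N), Real.rpow_one,
          ← Real.sqrt_eq_rpow]
end

section
/- Let s > 2 and define for each a2 in {1,...,N} the quantity S(a1,a3) := ∑_{a2=1}^N 1/(1 + d((a1,a2),(a2,a3))^s). Then there exist constants c, C > 0 such that S(a1,a1) ≥ c·N for every a1 (so the counting rule fails for internal indices), while for a1 ≠ a3, S(a1,a3) ≤ C·(1 + N/(1+|a1-a3|^s)). -/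
open Finset MeasureTheory

theorem internal_index_summation (s : ℝ) (hs : 2 < s) :
    ∃ c C : ℝ, 0 < c ∧ 0 < C ∧ ∀ (N : ℕ) (a1 a3 : Fin N),
      (c * N ≤ ∑ a2 : Fin N, 1 / (1 + dIdx (a1, a2) (a2, a1) ^ s)) ∧
      (a1 ≠ a3 →
        ∑ a2 : Fin N, 1 / (1 + dIdx (a1, a2) (a2, a3) ^ s)
          ≤ C * (1 + N / (1 + |((a1:ℕ):ℝ) - ((a3:ℕ):ℝ)| ^ s))) := by
  have hs0 : s ≠ 0 := by positivity
  refine ⟨1, 1, one_pos, one_pos, fun N a1 a3 => ⟨?_, fun hne => ?_⟩⟩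
  · have hd : ∀ a2 : Fin N, dIdx (a1, a2) (a2, a1) = 0 := by
      intro a2
      unfold dIdx
      simp [min_eq_right, abs_nonneg, add_nonneg]
    calc (1 : ℝ) * N = ∑ _a2 : Fin N, (1 : ℝ) := by simp
    _ ≤ _ := by
        refine Finset.sum_le_sum fun a2 _ => ?_
        rw [hd a2, Real.zero_rpow hs0]
        norm_num
  · have hd : ∀ a2 : Fin N, dIdx (a1, a2) (a2, a3) = |((a1:ℕ):ℝ) - ((a3:ℕ):ℝ)| := by
      intro a2
      unfold dIdx
      simp only [sub_self, abs_zero, add_zero]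
      exact min_eq_right (abs_sub_le _ _ _)
    have h1 : (0:ℝ) < 1 + |((a1:ℕ):ℝ) - ((a3:ℕ):ℝ)| ^ s := by
      have := Real.rpow_nonneg (abs_nonneg (((a1:ℕ):ℝ) - ((a3:ℕ):ℝ))) s
      linarith
    calc ∑ a2 : Fin N, 1 / (1 + dIdx (a1, a2) (a2, a3) ^ s)
        = ∑ _a2 : Fin N, 1 / (1 + |((a1:ℕ):ℝ) - ((a3:ℕ):ℝ)| ^ s) := by
          refine Finset.sum_congr rfl fun a2 _ => by rw [hd a2]
      _ = N / (1 + |((a1:ℕ):ℝ) - ((a3:ℕ):ℝ)| ^ s) := by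
          rw [Finset.sum_const, Finset.card_univ, Fintype.card_fin]
          ring
      _ ≤ 1 * (1 + N / (1 + |((a1:ℕ):ℝ) - ((a3:ℕ):ℝ)| ^ s)) := by
          rw [one_mul]
          have : (0:ℝ) ≤ N / (1 + |((a1:ℕ):ℝ) - ((a3:ℕ):ℝ)| ^ s) :=
            div_nonneg (Nat.cast_nonneg N) h1.le
          linarith
end
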